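/- arXiv:2509.05143 — 8 statements merged into one kernel-verified Lean document; each statement's English description precedes it below -/
import Mathlib

section
/- Let G = (V,E) be a graph on at least two vertices, C a finite color set, f : E → C an edge-coloring, and k, ℓ positive integers. Then the following are equivalent: (i) G is edge-ℓ-color-avoiding k-vertex-connected; (ii) after the removal of all edges of any at most ℓ colors, there remain at least k pairwise internally vertex-disjoint paths between any two vertices; (iii) there exists no mixed cut of G of the form V' ∪ E' ∪ E'' with V' ⊆ V and E', E'' ⊆ E such that |V'| + |E'| ≤ k−1 and the edges of E'' use at most ℓ colors. -/
namespace Stmt2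

open SimpleGraph

variable {V : Type*}

/-- There exist `k` pairwise distinct, pairwise internally vertex-disjoint `u`-`v` paths
in `G`. -/
def InternallyDisjointPaths (G : SimpleGraph V) (u v : V) (k : ℕ) : Prop :=
  ∃ p : Fin k → G.Walk u v,
    (∀ i, (p i).IsPath) ∧
    (∀ i j, i ≠ j → p i ≠ p j) ∧
    ∀ i j, i ≠ j → ∀ x, x ∈ (p i).support.tail.dropLast → x ∉ (p j).support.tail.dropLast

/-- `G` is `k`-vertex-connected: it has at least two vertices and any two distinct vertices
are joined by at least `k` pairwise internally vertex-disjoint paths. -/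
def VertexConnected (G : SimpleGraph V) (k : ℕ) : Prop :=
  (∃ u v : V, u ≠ v) ∧ ∀ u v : V, u ≠ v → InternallyDisjointPaths G u v k

/-- Reachability in `G` by a walk avoiding the vertex set `S`. -/
def RA (G : SimpleGraph V) (S : Set V) (a b : V) : Prop :=
  ∃ w : G.Walk a b, ∀ s ∈ S, s ∉ w.support

/-- `S` separates `A` from `B` in `G`. -/
def Sep (G : SimpleGraph V) (A B : Set V) (S : Set V) : Prop :=
  ∀ a ∈ A, ∀ b ∈ B, ¬ RA G S a b

lemma RA.mono {G : SimpleGraph V} {S S' : Set V} (h : S' ⊆ S) {a b : V} (hr : RA G S a b) :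
    RA G S' a b := by
  obtain ⟨w, hw⟩ := hr
  exact ⟨w, fun s hs => hw s (h hs)⟩

lemma RA.symm {G : SimpleGraph V} {S : Set V} {a b : V} (hr : RA G S a b) : RA G S b a := by
  obtain ⟨w, hw⟩ := hr
  exact ⟨w.reverse, by simpa using hw⟩

lemma RA.trans {G : SimpleGraph V} {S : Set V} {a b c : V} (h1 : RA G S a b)
    (h2 : RA G S b c) : RA G S a c := by
  obtain ⟨w1, hw1⟩ := h1
  obtain ⟨w2, hw2⟩ := h2
  refine ⟨w1.append w2, fun s hs hmem => ?_⟩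
  rw [Walk.mem_support_append_iff] at hmem
  rcases hmem with h | h
  · exact hw1 s hs h
  · exact hw2 s hs h

lemma RA.nil {G : SimpleGraph V} {S : Set V} {a : V} (ha : a ∉ S) : RA G S a a :=
  ⟨Walk.nil, fun s hs hmem => by simp at hmem; exact ha (hmem ▸ hs)⟩

lemma RA.notMem_left {G : SimpleGraph V} {S : Set V} {a b : V} (h : RA G S a b) : a ∉ S := by
  obtain ⟨w, hw⟩ := h
  intro ha
  exact hw a ha w.start_mem_support

lemma RA.notMem_right {G : SimpleGraph V} {S : Set V} {a b : V} (h : RA G S a b) : b ∉ S :=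
  h.symm.notMem_left

lemma RA.single {G : SimpleGraph V} {S : Set V} {a b : V} (hab : G.Adj a b)
    (ha : a ∉ S) (hb : b ∉ S) : RA G S a b := by
  refine ⟨Walk.cons hab Walk.nil, fun s hs hmem => ?_⟩
  simp only [Walk.support_cons, Walk.support_nil, List.mem_cons, List.mem_singleton,
    List.not_mem_nil, or_false] at hmem
  rcases hmem with rfl | rfl
  · exact ha hs
  · exact hb hs

/-- transfer to a subgraph obtained by deleting one edge, or cross that edge. -/
lemma ra_deleteEdge_cases {G : SimpleGraph V} {x y : V} {S : Set V} {a b : V}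
    (h : RA G S a b) :
    RA (G.deleteEdges {s(x, y)}) S a b ∨
      (RA (G.deleteEdges {s(x, y)}) S a x ∧ RA (G.deleteEdges {s(x, y)}) S y b) ∨
      (RA (G.deleteEdges {s(x, y)}) S a y ∧ RA (G.deleteEdges {s(x, y)}) S x b) := by
  obtain ⟨w, hw⟩ := h
  induction w with
  | nil =>
    exact Or.inl ⟨Walk.nil, by simpa using hw⟩
  | @cons a c b hadj w ih =>
    have hanS : a ∉ S := fun hs => hw a hs (by simp)
    have hcnS : c ∉ S := fun hs => hw c hs (by simp [Walk.support_cons])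
    have hw' : ∀ s ∈ S, s ∉ w.support := by
      intro s hs hmem
      exact hw s hs (by simp [Walk.support_cons, hmem])
    have IH := ih hw'
    by_cases hec : s(a, c) = s(x, y)
    · -- the first edge is the deleted edge
      rw [Sym2.eq_iff] at hec
      rcases hec with ⟨rfl, rfl⟩ | ⟨rfl, rfl⟩
      · -- a = x, c = y
        rcases IH with h1 | ⟨h2a, h2b⟩ | ⟨h3a, h3b⟩
        · exact Or.inr (Or.inl ⟨RA.nil hanS, h1⟩)
        · exact Or.inr (Or.inl ⟨RA.nil hanS, h2b⟩)
        · exact Or.inl h3b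
      · -- a = y, c = x
        rcases IH with h1 | ⟨h2a, h2b⟩ | ⟨h3a, h3b⟩
        · exact Or.inr (Or.inr ⟨RA.nil hanS, h1⟩)
        · exact Or.inl h2b
        · exact Or.inr (Or.inr ⟨RA.nil hanS, h3b⟩)
    · have hadj' : (G.deleteEdges {s(x, y)}).Adj a c := by
        rw [SimpleGraph.deleteEdges_adj]
        exact ⟨hadj, by simpa using hec⟩
      have hstep : RA (G.deleteEdges {s(x, y)}) S a c := RA.single hadj' hanS hcnS
      rcases IH with h1 | ⟨h2a, h2b⟩ | ⟨h3a, h3b⟩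
      · exact Or.inl (hstep.trans h1)
      · exact Or.inr (Or.inl ⟨hstep.trans h2a, h2b⟩)
      · exact Or.inr (Or.inr ⟨hstep.trans h3a, h3b⟩)


lemma Sep.symmSets {G : SimpleGraph V} {A B S : Set V} (h : Sep G A B S) : Sep G B A S :=
  fun b hb a ha hr => h a ha b hb hr.symm

lemma ra_split_or [DecidableEq V] {G : SimpleGraph V} {S : Set V} {a b : V}
    (h : RA G S a b) (T : Set V) :
    RA G (S ∪ T) a b ∨ ∃ t ∈ T, RA G S a t ∧ RA G S t b := by
  obtain ⟨w, hw⟩ := h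
  by_cases hT : ∃ t ∈ T, t ∈ w.support
  · obtain ⟨t, htT, hts⟩ := hT
    refine Or.inr ⟨t, htT, ⟨w.takeUntil t hts, fun s hs hmem => hw s hs ?_⟩,
      ⟨w.dropUntil t hts, fun s hs hmem => hw s hs ?_⟩⟩
    · exact w.support_takeUntil_subset hts hmem
    · exact w.support_dropUntil_subset hts hmem
  · push_neg at hT
    refine Or.inl ⟨w, fun s hs hmem => ?_⟩
    rcases hs with hs | hs
    · exact hw s hs hmem
    · exact hT s hs hmem

lemma notMem_support_takeUntil_end [DecidableEq V] {G : SimpleGraph V} {a t : V}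
    {p : G.Walk a t} (hp : p.IsPath) {w : V} (hw : w ∈ p.support) (hne : w ≠ t) :
    t ∉ (p.takeUntil w hw).support := by
  intro ht
  have hspec := p.take_spec hw
  have hnodup : p.support.Nodup := hp.support_nodup
  rw [← hspec, Walk.support_append] at hnodup
  have hdisj := List.disjoint_of_nodup_append hnodup
  have htd : t ∈ (p.dropUntil w hw).support.tail := by
    have h1 : t ∈ (p.dropUntil w hw).support := Walk.end_mem_support _
    rw [Walk.support_eq_cons, List.mem_cons] at h1
    rcases h1 with h1 | h1
    · exact absurd h1.symm hne
    · exact h1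
  exact hdisj ht htd

lemma notMem_support_dropUntil_start [DecidableEq V] {G : SimpleGraph V} {a b : V}
    {p : G.Walk a b} (hp : p.IsPath) {w : V} (hw : w ∈ p.support) (hne : w ≠ a) :
    a ∉ (p.dropUntil w hw).support := by
  intro ha
  have hspec := p.take_spec hw
  have hnodup : p.support.Nodup := hp.support_nodup
  rw [← hspec, Walk.support_append] at hnodup
  have hdisj := List.disjoint_of_nodup_append hnodup
  have had : a ∈ (p.dropUntil w hw).support.tail := by
    rw [Walk.support_eq_cons, List.mem_cons] at ha
    rcases ha with ha | ha
    · exact absurd ha.symm hne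
    · exact ha
  exact hdisj (Walk.start_mem_support _) had


/-- `k` pairwise disjoint `A`–`B` paths. -/
def DisjPaths (G : SimpleGraph V) (A B : Set V) (k : ℕ) : Prop :=
  ∃ (a b : Fin k → V) (p : ∀ i, G.Walk (a i) (b i)),
    (∀ i, a i ∈ A) ∧ (∀ i, b i ∈ B) ∧ (∀ i, (p i).IsPath) ∧
    ∀ i j, i ≠ j → ∀ z, z ∈ (p i).support → z ∉ (p j).support

lemma not_sep_iff {G : SimpleGraph V} {A B S : Set V} :
    ¬ Sep G A B S ↔ ∃ a ∈ A, ∃ b ∈ B, RA G S a b := by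
  unfold Sep
  push_neg
  rfl

lemma disjPaths_edgeless [Fintype V] {G : SimpleGraph V} (hE : G.edgeSet = ∅)
    {A B : Set V} {k : ℕ} (hsep : ∀ S : Set V, Sep G A B S → k ≤ S.ncard) :
    DisjPaths G A B k := by
  have hwalk : ∀ (a b : V), G.Walk a b → a = b := by
    intro a b w
    have hbot : G = ⊥ := by rwa [← SimpleGraph.edgeSet_eq_empty]
    subst hbot
    cases w with
    | nil => rfl
    | cons h p => simp at h
  have hAB2 : Sep G A B (A ∩ B) := by
    rintro a ha b hb ⟨w, hw⟩
    have hab := hwalk a b w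
    subst hab
    exact hw a ⟨ha, hb⟩ w.start_mem_support
  have hk : k ≤ (A ∩ B).ncard := hsep _ hAB2
  obtain ⟨t, hts, htcard⟩ := Set.exists_subset_card_eq hk
  have htfin : t.Finite := Set.toFinite t
  have hcard : htfin.toFinset.card = k := by
    rw [← Set.ncard_eq_toFinset_card _ htfin]; exact htcard
  let iso := (Finset.equivFinOfCardEq hcard).symm
  refine ⟨fun i => iso i, fun i => iso i, fun i => Walk.nil, fun i => ?_, fun i => ?_,
    fun i => Walk.IsPath.nil, fun i j hij z hz1 hz2 => ?_⟩
  · have : (iso i : V) ∈ t := by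
      have := (iso i).2
      rwa [Set.Finite.mem_toFinset] at this
    exact (hts this).1
  · have : (iso i : V) ∈ t := by
      have := (iso i).2
      rwa [Set.Finite.mem_toFinset] at this
    exact (hts this).2
  · simp only [Walk.support_nil, List.mem_singleton] at hz1 hz2
    subst hz1
    have : iso i = iso j := Subtype.ext hz2
    exact hij (iso.injective this)

section Claims

variable [Fintype V] [DecidableEq V] {G G' : SimpleGraph V} {x y : V}

/-- Key claim in the inductive step of Menger's theorem: every `A`–`(Y ∪ {x})`
separator in `G'` has at least `k` elements. -/
lemma claim1
    (hcross : ∀ {S : Set V} {a b : V}, RA G S a b →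
      RA G' S a b ∨ (RA G' S a x ∧ RA G' S y b) ∨ (RA G' S a y ∧ RA G' S x b))
    {A B : Set V} {k : ℕ}
    (hGsep : ∀ S : Set V, Sep G A B S → k ≤ S.ncard)
    {Y : Set V} (hYsep : Sep G' A B Y) (hYk : Y.ncard + 1 = k)
    {b₀ : V} (hb₀ : b₀ ∈ B) (hyb : RA G' Y y b₀) :
    ∀ S : Set V, Sep G' A (insert x Y) S → k ≤ S.ncard := by
  intro S hSsep
  by_contra hc
  push_neg at hc
  -- `insert y S` separates `A` from `B` in `G`
  have hSyG : Sep G A B (insert y S) := by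
    intro a ha b hb hRA
    rcases hcross hRA with h1 | ⟨h2a, _⟩ | ⟨h3a, _⟩
    · rcases ra_split_or h1 (insert x Y) with hL | ⟨t, htT, hat, _⟩
      · exact hYsep a ha b hb (hL.mono (fun z hz => Set.mem_union_right _ (Set.mem_insert_of_mem x hz)))
      · exact hSsep a ha t htT (hat.mono (fun z hz => Set.mem_insert_of_mem y hz))
    · exact hSsep a ha x (Set.mem_insert x Y) (h2a.mono (fun z hz => Set.mem_insert_of_mem y hz))
    · exact h3a.notMem_right (Set.mem_insert y S)
  have hkS : k ≤ (insert y S).ncard := hGsep _ hSyG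
  have hkS' : k = S.ncard + 1 := by
    have := Set.ncard_insert_le y S
    omega
  -- `S` does not separate `A` from `B` in `G`
  have hnS : ¬ Sep G A B S := fun h => by have := hGsep _ h; omega
  rw [not_sep_iff] at hnS
  obtain ⟨a₁, ha₁, b₁, hb₁, hRA1⟩ := hnS
  rcases hcross hRA1 with h1 | ⟨h2a, _⟩ | ⟨h3a, _⟩
  · rcases ra_split_or h1 (insert x Y) with hL | ⟨t, htT, hat, _⟩
    · exact hYsep a₁ ha₁ b₁ hb₁ (hL.mono (fun z hz => Set.mem_union_right _ (Set.mem_insert_of_mem x hz)))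
    · exact hSsep a₁ ha₁ t htT hat
  · exact hSsep a₁ ha₁ x (Set.mem_insert x Y) h2a
  · rcases ra_split_or h3a (insert x Y) with hL | ⟨t, htT, hat, _⟩
    · exact hYsep a₁ ha₁ b₀ hb₀ ((hL.mono (fun z hz => Set.mem_union_right _ (Set.mem_insert_of_mem x hz))).trans hyb)
    · exact hSsep a₁ ha₁ t htT hat


/-- The inductive step core of Menger's theorem. -/
lemma core (hle : G' ≤ G) (hxy : G.Adj x y)
    (hcross : ∀ {S : Set V} {a b : V}, RA G S a b →
      RA G' S a b ∨ (RA G' S a x ∧ RA G' S y b) ∨ (RA G' S a y ∧ RA G' S x b))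
    {A B : Set V} {k : ℕ}
    (IH : ∀ A B : Set V, (∀ S : Set V, Sep G' A B S → k ≤ S.ncard) → DisjPaths G' A B k)
    (hGsep : ∀ S : Set V, Sep G A B S → k ≤ S.ncard)
    {Y : Set V} (hYsep : Sep G' A B Y) (hYcard : Y.ncard < k)
    {a₀ b₀ : V} (ha₀ : a₀ ∈ A) (hb₀ : b₀ ∈ B)
    (hax : RA G' Y a₀ x) (hyb : RA G' Y y b₀) :
    DisjPaths G A B k := by
  have hxny : x ∉ Y := hax.notMem_right
  have hyny : y ∉ Y := hyb.notMem_left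
  have hxyne : x ≠ y := hxy.ne
  -- `insert x Y` separates `A` from `B` in `G`
  have hSepX : Sep G A B (insert x Y) := by
    intro a ha b hb hRA
    rcases hcross hRA with h1 | ⟨h2a, _⟩ | ⟨_, h3b⟩
    · exact hYsep a ha b hb (h1.mono (fun z hz => Set.mem_insert_of_mem x hz))
    · exact h2a.notMem_right (Set.mem_insert x Y)
    · exact h3b.notMem_left (Set.mem_insert x Y)
  have hYk : Y.ncard + 1 = k := by
    have h1 := hGsep _ hSepX
    have h2 := Set.ncard_insert_le x Y
    omega
  have hcross' : ∀ {S : Set V} {a b : V}, RA G S a b →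
      RA G' S a b ∨ (RA G' S a y ∧ RA G' S x b) ∨ (RA G' S a x ∧ RA G' S y b) := by
    intro S a b h
    rcases hcross h with h1 | h2 | h3
    · exact Or.inl h1
    · exact Or.inr (Or.inr h2)
    · exact Or.inr (Or.inl h3)
  have c1 : ∀ S : Set V, Sep G' A (insert x Y) S → k ≤ S.ncard :=
    claim1 hcross hGsep hYsep hYk hb₀ hyb
  have c2 : ∀ S : Set V, Sep G' B (insert y Y) S → k ≤ S.ncard :=
    claim1 hcross' (fun S h => hGsep S h.symmSets) hYsep.symmSets hYk ha₀ hax.symm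
  obtain ⟨a, t, p, hamem, htmem, hppath, hpdisj⟩ := IH A (insert x Y) c1
  obtain ⟨s, b, q, hsmem, hbmem, hqpath, hqdisj⟩ :=
    IH (insert y Y) B (fun S h => c2 S h.symmSets)
  -- `t` is injective with range `insert x Y`
  have htinj : Function.Injective t := by
    intro i j hij
    by_contra hne
    refine hpdisj i j hne (t i) ((p i).end_mem_support) ?_
    rw [hij]
    exact (p j).end_mem_support
  have htrange : Set.range t = insert x Y := by
    apply Set.eq_of_subset_of_ncard_le
    · rintro z ⟨i, rfl⟩; exact htmem i
    · have : (Set.range t).ncard = k := by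
        rw [← Set.image_univ, Set.ncard_image_of_injective _ htinj, Set.ncard_univ,
          Nat.card_eq_fintype_card, Fintype.card_fin]
      rw [this]
      have := Set.ncard_insert_le x Y
      omega
    · exact Set.toFinite _
  have hsinj : Function.Injective s := by
    intro i j hij
    by_contra hne
    refine hqdisj i j hne (s i) ((q i).start_mem_support) ?_
    rw [hij]
    exact (q j).start_mem_support
  have hsrange : Set.range s = insert y Y := by
    apply Set.eq_of_subset_of_ncard_le
    · rintro z ⟨i, rfl⟩; exact hsmem i
    · have : (Set.range s).ncard = k := by
        rw [← Set.image_univ, Set.ncard_image_of_injective _ hsinj, Set.ncard_univ,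
          Nat.card_eq_fintype_card, Fintype.card_fin]
      rw [this]
      have := Set.ncard_insert_le y Y
      omega
    · exact Set.toFinite _
  -- the matching between endpoints
  set m : Fin k → V := fun i => if t i = x then y else t i with hm
  have hmmem : ∀ i, m i ∈ Set.range s := by
    intro i
    rw [hsrange]
    by_cases h : t i = x
    · simp [hm, h]
    · have : t i ∈ insert x Y := htmem i
      rcases this with h' | h'
      · exact absurd h' h
      · simp only [hm, if_neg h]
        exact Set.mem_insert_of_mem y h'
  choose σ hσ using fun i => (hmmem i)
  have hσinj : Function.Injective σ := by
    intro i j hij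
    have hm_eq : m i = m j := by rw [← hσ i, ← hσ j, hij]
    by_cases hi : t i = x <;> by_cases hj : t j = x
    · exact htinj (hi.trans hj.symm)
    · exfalso
      simp only [hm, if_pos hi, if_neg hj] at hm_eq
      have : t j ∈ insert x Y := htmem j
      rcases this with h' | h'
      · exact hj h'
      · exact hyny (hm_eq ▸ h')
    · exfalso
      simp only [hm, if_neg hi, if_pos hj] at hm_eq
      have : t i ∈ insert x Y := htmem i
      rcases this with h' | h'
      · exact hi h'
      · exact hyny (hm_eq ▸ h')
    · simp only [hm, if_neg hi, if_neg hj] at hm_eq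
      exact htinj hm_eq
  -- key facts
  have KF1 : ∀ i z, z ∈ (p i).support → z ∈ insert x Y → z = t i := by
    intro i z hz hzX
    by_contra hne
    rw [← htrange] at hzX
    obtain ⟨j, rfl⟩ := hzX
    have hji : j ≠ i := fun h => hne (h ▸ rfl)
    exact hpdisj j i hji (t j) ((p j).end_mem_support) hz
  have KF2 : ∀ j z, z ∈ (q j).support → z ∈ insert y Y → z = s j := by
    intro j z hz hzX
    by_contra hne
    rw [← hsrange] at hzX
    obtain ⟨j', rfl⟩ := hzX
    have hji : j' ≠ j := fun h => hne (h ▸ rfl)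
    exact hqdisj j' j hji (s j') ((q j').start_mem_support) hz
  have GD : ∀ i j z, z ∈ (p i).support → z ∈ (q j).support → z ∈ Y := by
    intro i j z hz1 hz2
    by_contra hzY
    have h1 : RA G' Y (a i) z := by
      refine ⟨(p i).takeUntil z hz1, fun c hc hcmem => ?_⟩
      have hcsupp : c ∈ (p i).support := (p i).support_takeUntil_subset hz1 hcmem
      have hcx : c = t i := KF1 i c hcsupp (Set.mem_insert_of_mem x hc)
      subst hcx
      have hznt : z ≠ t i := fun h => hzY (h ▸ hc)
      exact notMem_support_takeUntil_end (hppath i) hz1 hznt hcmem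
    have h2 : RA G' Y z (b j) := by
      refine ⟨(q j).dropUntil z hz2, fun c hc hcmem => ?_⟩
      have hcsupp : c ∈ (q j).support := (q j).support_dropUntil_subset hz2 hcmem
      have hcy : c = s j := KF2 j c hcsupp (Set.mem_insert_of_mem y hc)
      subst hcy
      have hzns : z ≠ s j := fun h => hzY (h ▸ hc)
      exact notMem_support_dropUntil_start (hqpath j) hz2 hzns hcmem
    exact hYsep (a i) (hamem i) (b j) (hbmem j) (h1.trans h2)
  have GD2 : ∀ i j z, z ∈ (p i).support → z ∈ (q j).support → z = t i ∧ z = s j := by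
    intro i j z hz1 hz2
    have hzY := GD i j z hz1 hz2
    exact ⟨KF1 i z hz1 (Set.mem_insert_of_mem x hzY),
      KF2 j z hz2 (Set.mem_insert_of_mem y hzY)⟩
  -- transfer the paths to `G`
  have hpedges : ∀ i, ∀ e ∈ (p i).edges, e ∈ G.edgeSet := by
    intro i e he
    exact (SimpleGraph.edgeSet_subset_edgeSet.2 hle) ((p i).edges_subset_edgeSet he)
  have hqedges : ∀ j, ∀ e ∈ (q j).edges, e ∈ G.edgeSet := by
    intro j e he
    exact (SimpleGraph.edgeSet_subset_edgeSet.2 hle) ((q j).edges_subset_edgeSet he)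
  -- glue
  have hR : ∀ i, ∃ w : G.Walk (a i) (b (σ i)),
      ∀ z ∈ w.support, z ∈ (p i).support ∨ z ∈ (q (σ i)).support := by
    intro i
    by_cases hti : t i = x
    · -- glue through the edge x-y
      have hsy : s (σ i) = y := by rw [hσ i, hm]; simp [hti]
      refine ⟨(((p i).transfer G (hpedges i)).copy rfl hti).append
        (Walk.cons hxy (((q (σ i)).transfer G (hqedges (σ i))).copy hsy rfl)), ?_⟩
      intro z hz
      rw [Walk.mem_support_append_iff] at hz
      rcases hz with hz | hz
      · rw [Walk.support_copy, Walk.support_transfer] at hz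
        exact Or.inl hz
      · rw [Walk.support_cons] at hz
        rcases List.mem_cons.1 hz with rfl | hz
        · exact Or.inl (hti ▸ (p i).end_mem_support)
        · rw [Walk.support_copy, Walk.support_transfer] at hz
          exact Or.inr hz
    · -- glue directly at `t i ∈ Y`
      have hsy : s (σ i) = t i := by rw [hσ i, hm]; simp [hti]
      refine ⟨((p i).transfer G (hpedges i)).append
        (((q (σ i)).transfer G (hqedges (σ i))).copy hsy rfl), ?_⟩
      intro z hz
      rw [Walk.mem_support_append_iff] at hz
      rcases hz with hz | hz
      · rw [Walk.support_transfer] at hz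
        exact Or.inl hz
      · rw [Walk.support_copy, Walk.support_transfer] at hz
        exact Or.inr hz
  choose R hRsupp using hR
  refine ⟨a, fun i => b (σ i), fun i => (R i).bypass, hamem, fun i => hbmem (σ i),
    fun i => Walk.bypass_isPath _, fun i j hij z hz1 hz2 => ?_⟩
  have hz1' := hRsupp i z ((R i).support_bypass_subset hz1)
  have hz2' := hRsupp j z ((R j).support_bypass_subset hz2)
  have hyq : ∀ i' j' z', z' ∈ (p i').support → z' ∈ (q (σ j')).support → i' = j' := by
    intro i' j' z' hzp hzq
    obtain ⟨hzt, hzs⟩ := GD2 i' (σ j') z' hzp hzq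
    have hzY := GD i' (σ j') z' hzp hzq
    by_cases hj' : t j' = x
    · exfalso
      have : s (σ j') = y := by rw [hσ j', hm]; simp [hj']
      rw [this] at hzs
      exact hyny (hzs ▸ hzY)
    · have : s (σ j') = t j' := by rw [hσ j', hm]; simp [hj']
      rw [this] at hzs
      exact htinj (hzt.symm.trans hzs)
  rcases hz1' with hz1' | hz1' <;> rcases hz2' with hz2' | hz2'
  · exact hpdisj i j hij z hz1' hz2'
  · exact hij (hyq i j z hz1' hz2')
  · exact hij ((hyq j i z hz2' hz1').symm)
  · exact hqdisj (σ i) (σ j) (fun h => hij (hσinj h)) z hz1' hz2'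

end Claims

section Menger

variable [Fintype V] [DecidableEq V]

lemma DisjPaths.mono {G G' : SimpleGraph V} (hle : G' ≤ G) {A B : Set V} {k : ℕ}
    (h : DisjPaths G' A B k) : DisjPaths G A B k := by
  obtain ⟨a, b, p, ha, hb, hpath, hdisj⟩ := h
  have hedges : ∀ i, ∀ e ∈ (p i).edges, e ∈ G.edgeSet := fun i e he =>
    (SimpleGraph.edgeSet_subset_edgeSet.2 hle) ((p i).edges_subset_edgeSet he)
  refine ⟨a, b, fun i => (p i).transfer G (hedges i), ha, hb,
    fun i => (hpath i).transfer _, fun i j hij z hz1 hz2 => ?_⟩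
  rw [Walk.support_transfer] at hz1 hz2
  exact hdisj i j hij z hz1 hz2

theorem setMengerAux (n : ℕ) : ∀ (G : SimpleGraph V) (A B : Set V) (k : ℕ),
    G.edgeSet.ncard ≤ n → (∀ S : Set V, Sep G A B S → k ≤ S.ncard) →
    DisjPaths G A B k := by
  induction n with
  | zero =>
    intro G A B k hn hsep
    have hE : G.edgeSet = ∅ :=
      (Set.ncard_eq_zero (Set.toFinite G.edgeSet)).mp (Nat.le_zero.mp hn)
    exact disjPaths_edgeless hE hsep
  | succ n ih =>
    intro G A B k hn hsep
    by_cases hE : G.edgeSet = ∅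
    · exact disjPaths_edgeless hE hsep
    · obtain ⟨e, he⟩ := Set.nonempty_iff_ne_empty.mpr hE
      induction e using Sym2.ind with
      | _ x y =>
      have hxy : G.Adj x y := (SimpleGraph.mem_edgeSet G).mp he
      set G' := G.deleteEdges {s(x, y)} with hG'
      have hle : G' ≤ G := SimpleGraph.deleteEdges_le _
      have hG'E : G'.edgeSet = G.edgeSet \ {s(x, y)} := SimpleGraph.edgeSet_deleteEdges _
      have hn' : G'.edgeSet.ncard ≤ n := by
        rw [hG'E, Set.ncard_diff_singleton_of_mem he]
        have hpos : 0 < G.edgeSet.ncard :=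
          (Set.ncard_pos (Set.toFinite _)).mpr ⟨_, he⟩
        omega
      have hcross : ∀ {S : Set V} {a b : V}, RA G S a b →
          RA G' S a b ∨ (RA G' S a x ∧ RA G' S y b) ∨ (RA G' S a y ∧ RA G' S x b) :=
        fun h => ra_deleteEdge_cases h
      have IH' : ∀ A B : Set V, (∀ S : Set V, Sep G' A B S → k ≤ S.ncard) →
          DisjPaths G' A B k := fun A B h => ih G' A B k hn' h
      by_cases hY : ∃ Y : Set V, Sep G' A B Y ∧ Y.ncard < k
      · obtain ⟨Y, hYsep, hYcard⟩ := hY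
        have hnY : ¬ Sep G A B Y := fun h => by have := hsep _ h; omega
        rw [not_sep_iff] at hnY
        obtain ⟨a₀, ha₀, b₀, hb₀, hRA⟩ := hnY
        rcases hcross hRA with h1 | ⟨h2a, h2b⟩ | ⟨h3a, h3b⟩
        · exact absurd h1 (hYsep a₀ ha₀ b₀ hb₀)
        · exact core hle hxy hcross IH' hsep hYsep hYcard ha₀ hb₀ h2a h2b
        · have hcross' : ∀ {S : Set V} {a b : V}, RA G S a b →
              RA G' S a b ∨ (RA G' S a y ∧ RA G' S x b) ∨ (RA G' S a x ∧ RA G' S y b) := by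
            intro S a b h
            rcases hcross h with h1 | h2 | h3
            · exact Or.inl h1
            · exact Or.inr (Or.inr h2)
            · exact Or.inr (Or.inl h3)
          exact core hle hxy.symm hcross' IH' hsep hYsep hYcard ha₀ hb₀ h3a h3b
      · push_neg at hY
        exact (IH' A B (fun S hS => hY S hS)).mono hle

theorem setMenger (G : SimpleGraph V) (A B : Set V) (k : ℕ)
    (hsep : ∀ S : Set V, Sep G A B S → k ≤ S.ncard) : DisjPaths G A B k :=
  setMengerAux G.edgeSet.ncard G A B k le_rfl hsep

lemma notMem_support_of_isolated {G : SimpleGraph V} {a b z : V}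
    (hiso : ∀ w, ¬ G.Adj z w) (p : G.Walk a b) (hb : b ≠ z) : z ∉ p.support := by
  intro hz
  have d := p.dropUntil z hz
  cases d with
  | nil => exact hb rfl
  | cons h _ => exact hiso _ h


theorem mengerNoEdge {H : SimpleGraph V} {u v : V} (huv : u ≠ v)
    (hE : s(u, v) ∉ H.edgeSet) {k : ℕ}
    (hsep : ∀ S : Set V, u ∉ S → v ∉ S → ¬ RA H S u v → k ≤ S.ncard) :
    ∃ p : Fin k → H.Walk u v, (∀ i, (p i).IsPath) ∧
      (∀ i, (p i).support.tail.dropLast ≠ []) ∧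
      (∀ i j, i ≠ j → ∀ z, z ∈ (p i).support.tail.dropLast →
        z ∉ (p j).support.tail.dropLast) := by
  classical
  set K := H.deleteEdges {e : Sym2 V | u ∈ e ∨ v ∈ e} with hK
  have hKle : K ≤ H := SimpleGraph.deleteEdges_le _
  have hKadj : ∀ a b : V, K.Adj a b ↔ H.Adj a b ∧ a ≠ u ∧ a ≠ v ∧ b ≠ u ∧ b ≠ v := by
    intro a b
    rw [hK, SimpleGraph.deleteEdges_adj]
    simp only [Set.mem_setOf_eq, Sym2.mem_iff]
    constructor
    · rintro ⟨h, h2⟩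
      push_neg at h2
      exact ⟨h, (h2.1.1).symm, (h2.2.1).symm, (h2.1.2).symm, (h2.2.2).symm⟩
    · rintro ⟨h, h1, h2, h3, h4⟩
      exact ⟨h, by push_neg; exact ⟨⟨h1.symm, h3.symm⟩, ⟨h2.symm, h4.symm⟩⟩⟩
  have hisoU : ∀ w, ¬ K.Adj u w := fun w h => ((hKadj u w).1 h).2.1 rfl
  have hisoV : ∀ w, ¬ K.Adj v w := fun w h => ((hKadj v w).1 h).2.2.1 rfl
  set A := H.neighborSet u with hA
  set B := H.neighborSet v with hB
  -- every A-B separator in K has at least k vertices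
  have hKsep : ∀ S : Set V, Sep K A B S → k ≤ S.ncard := by
    intro S hS
    have hk' : k ≤ (S \ {u, v}).ncard := by
      apply hsep (S \ {u, v}) (by simp) (by simp)
      rintro ⟨w0, hw0⟩
      have hwB : ∀ s ∈ S \ {u, v}, s ∉ w0.bypass.support :=
        fun s hs hmem => hw0 s hs (w0.support_bypass_subset hmem)
      have hwP : w0.bypass.IsPath := w0.bypass_isPath
      revert hwB hwP
      generalize w0.bypass = w
      intro hwB hwP
      cases w with
      | nil => exact huv rfl
      | @cons _ c _ h p' =>
        obtain ⟨r, rfl⟩ : ∃ r : H.Walk v c, p' = r.reverse :=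
          ⟨p'.reverse, p'.reverse_reverse.symm⟩
        cases r with
        | nil => exact hE ((SimpleGraph.mem_edgeSet H).mpr h)
        | @cons _ d _ h2 r2 =>
          -- w = cons h (cons h2 r2).reverse,  mid := r2.reverse : Walk c d
          set mid := r2.reverse with hmid
          have hsuppw : (Walk.cons h (Walk.cons h2 r2).reverse).support
              = u :: (mid.support ++ [v]) := by
            rw [Walk.support_cons, Walk.support_reverse, Walk.support_cons, hmid,
              Walk.support_reverse]
            simp
          have hnodup := hwP.support_nodup
          rw [hsuppw] at hnodup
          have hunotmid : u ∉ mid.support := by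
            intro hu
            exact (List.nodup_cons.mp hnodup).1 (List.mem_append_left _ hu)
          have hvnotmid : v ∉ mid.support := by
            intro hv
            have := (List.nodup_cons.mp hnodup).2
            have := List.disjoint_of_nodup_append this
            exact this hv (List.mem_singleton_self v)
          have hmidedges : ∀ e ∈ mid.edges, e ∈ K.edgeSet := by
            intro e he
            rw [hK, SimpleGraph.edgeSet_deleteEdges]
            refine ⟨mid.edges_subset_edgeSet he, ?_⟩
            simp only [Set.mem_setOf_eq]
            rintro (hue | hve)
            · induction e using Sym2.ind with
              | _ z1 z2 =>
                rcases Sym2.mem_iff.mp hue with rfl | rfl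
                · exact hunotmid (mid.fst_mem_support_of_mem_edges he)
                · exact hunotmid (mid.snd_mem_support_of_mem_edges he)
            · induction e using Sym2.ind with
              | _ z1 z2 =>
                rcases Sym2.mem_iff.mp hve with rfl | rfl
                · exact hvnotmid (mid.fst_mem_support_of_mem_edges he)
                · exact hvnotmid (mid.snd_mem_support_of_mem_edges he)
          have hcA : c ∈ A := h
          have hdB : d ∈ B := h2
          refine hS c hcA d hdB ⟨mid.transfer K hmidedges, fun s hs hmem => ?_⟩
          · rw [Walk.support_transfer] at hmem
            by_cases hsu : s = u
            · exact hunotmid (hsu ▸ hmem)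
            · by_cases hsv : s = v
              · exact hvnotmid (hsv ▸ hmem)
              · refine hwB s ⟨hs, by simp [hsu, hsv]⟩ ?_
                rw [hsuppw]
                simp only [List.mem_cons, List.mem_append, List.mem_singleton]
                exact Or.inr (Or.inl hmem)
    calc k ≤ (S \ {u, v}).ncard := hk'
    _ ≤ S.ncard := Set.ncard_le_ncard (Set.diff_subset) (Set.toFinite S)
  obtain ⟨α, β, mid, hα, hβ, hmidpath, hmiddisj⟩ := setMenger K A B k hKsep
  -- build the u-v paths
  have hαu : ∀ i, α i ≠ u := fun i h => H.irrefl (h ▸ (hα i))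
  have hαv : ∀ i, α i ≠ v := fun i h =>
    hE ((SimpleGraph.mem_edgeSet H).mpr (h ▸ (hα i)))
  have hβv : ∀ i, β i ≠ v := fun i h => H.irrefl (h ▸ (hβ i))
  have hβu : ∀ i, β i ≠ u := fun i h =>
    hE ((SimpleGraph.mem_edgeSet H).mpr ((h ▸ (hβ i)) : H.Adj v u).symm)
  have humid : ∀ i, u ∉ (mid i).support :=
    fun i => notMem_support_of_isolated hisoU (mid i) (hβu i)
  have hvmid : ∀ i, v ∉ (mid i).support := by
    intro i hmem
    have := notMem_support_of_isolated hisoV (mid i).reverse (hαv i)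
    rw [Walk.support_reverse, List.mem_reverse] at this
    exact this hmem
  have hmedges : ∀ i, ∀ e ∈ (mid i).edges, e ∈ H.edgeSet := fun i e he =>
    (SimpleGraph.edgeSet_subset_edgeSet.2 hKle) ((mid i).edges_subset_edgeSet he)
  have hadju : ∀ i, H.Adj u (α i) := fun i => hα i
  have hadjv : ∀ i, H.Adj v (β i) := fun i => hβ i
  refine ⟨fun i => Walk.cons (hadju i)
    ((Walk.cons (hadjv i) ((mid i).transfer H (hmedges i)).reverse).reverse), ?_, ?_, ?_⟩
  all_goals
    have hsupp : ∀ i, (Walk.cons (hadju i)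
        ((Walk.cons (hadjv i) ((mid i).transfer H (hmedges i)).reverse).reverse)).support
        = u :: ((mid i).support ++ [v]) := by
      intro i
      rw [Walk.support_cons, Walk.support_reverse, Walk.support_cons, Walk.support_reverse,
        Walk.support_transfer]
      simp
  · intro i
    have h1 : ((mid i).transfer H (hmedges i)).reverse.IsPath :=
      ((hmidpath i).transfer _).reverse
    have h2 : (Walk.cons (hadjv i) ((mid i).transfer H (hmedges i)).reverse).IsPath := by
      refine h1.cons ?_
      rw [Walk.support_reverse, List.mem_reverse, Walk.support_transfer]
      exact hvmid i
    refine (h2.reverse).cons ?_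
    rw [Walk.support_reverse, List.mem_reverse, Walk.support_cons, Walk.support_reverse,
      Walk.support_transfer]
    simp only [List.mem_cons, List.mem_reverse]
    rintro (h | h)
    · exact huv h
    · exact humid i h
  · intro i
    have : (Walk.cons (hadju i)
        ((Walk.cons (hadjv i) ((mid i).transfer H (hmedges i)).reverse).reverse)).support.tail.dropLast
        = (mid i).support := by
      rw [hsupp i]
      simp only [List.tail_cons]
      rw [List.dropLast_concat]
    rw [this]
    exact (mid i).support_ne_nil
  · intro i j hij z hz1 hz2
    have hint : ∀ l, (Walk.cons (hadju l)
        ((Walk.cons (hadjv l) ((mid l).transfer H (hmedges l)).reverse).reverse)).support.tail.dropLast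
        = (mid l).support := by
      intro l
      rw [hsupp l]
      simp only [List.tail_cons]
      rw [List.dropLast_concat]
    rw [hint i] at hz1
    rw [hint j] at hz2
    exact hmiddisj i j hij z hz1 hz2


theorem mengerMixed {H : SimpleGraph V} {u v : V} (huv : u ≠ v) {k : ℕ}
    (hsep : ∀ (S : Set V) (F : Set (Sym2 V)), u ∉ S → v ∉ S → F ⊆ H.edgeSet →
      ¬ RA (H.deleteEdges F) S u v → k ≤ S.ncard + F.ncard) :
    InternallyDisjointPaths H u v k := by
  classical
  rcases Nat.eq_zero_or_pos k with rfl | hk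
  · exact ⟨fun i => i.elim0, fun i => i.elim0, fun i => i.elim0, fun i => i.elim0⟩
  by_cases hEuv : s(u, v) ∈ H.edgeSet
  · -- uv is an edge: remove it and find k-1 paths
    set H' := H.deleteEdges {s(u, v)} with hH'
    have hE' : s(u, v) ∉ H'.edgeSet := by
      rw [hH', SimpleGraph.edgeSet_deleteEdges]
      simp
    have hsep' : ∀ S : Set V, u ∉ S → v ∉ S → ¬ RA H' S u v → k - 1 ≤ S.ncard := by
      intro S hu hv hnRA
      have h := hsep S {s(u, v)} hu hv (by simpa using hEuv) (by rwa [hH'] at hnRA)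
      have : ({s(u, v)} : Set (Sym2 V)).ncard = 1 := Set.ncard_singleton _
      omega
    obtain ⟨p, hpath, hne, hdisj⟩ := mengerNoEdge huv hE' hsep'
    have hedges : ∀ i, ∀ e ∈ (p i).edges, e ∈ H.edgeSet := fun i e he =>
      (SimpleGraph.edgeSet_subset_edgeSet.2 (SimpleGraph.deleteEdges_le _))
        ((p i).edges_subset_edgeSet he)
    set e₀ : H.Walk u v := Walk.cons ((SimpleGraph.mem_edgeSet H).mp hEuv) Walk.nil with he₀
    set P : Fin k → H.Walk u v := fun i =>
      if h : (i : ℕ) < k - 1 then (p ⟨i, h⟩).transfer H (hedges _) else e₀ with hP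
    have hPsupp : ∀ (i : Fin k) (h : (i : ℕ) < k - 1),
        (P i).support = (p ⟨i, h⟩).support := by
      intro i h
      rw [hP]
      simp only [dif_pos h]
      exact Walk.support_transfer _ _
    have he₀int : e₀.support.tail.dropLast = [] := by
      rw [he₀]
      simp
    refine ⟨P, ?_, ?_, ?_⟩
    · intro i
      by_cases h : (i : ℕ) < k - 1
      · rw [hP]; simp only [dif_pos h]; exact (hpath _).transfer _
      · rw [hP]; simp only [dif_neg h]
        rw [he₀]
        exact ((Walk.IsPath.nil).cons (by simpa using huv))
    · intro i j hij hPij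
      by_cases hi : (i : ℕ) < k - 1 <;> by_cases hj : (j : ℕ) < k - 1
      · -- both transferred paths: interiors disjoint and nonempty
        have hidx : (⟨i, hi⟩ : Fin (k-1)) ≠ ⟨j, hj⟩ := by
          intro h
          rw [Fin.mk.injEq] at h
          exact hij (Fin.ext h)
        have hsi : (P i).support = (p ⟨i, hi⟩).support := hPsupp i hi
        have hsj : (P j).support = (p ⟨j, hj⟩).support := hPsupp j hj
        have hsupp_eq : (p ⟨i, hi⟩).support = (p ⟨j, hj⟩).support := by
          rw [← hsi, ← hsj, hPij]
        obtain ⟨z, hz⟩ := List.exists_mem_of_ne_nil _ (hne ⟨i, hi⟩)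
        have hz' : z ∈ (p ⟨j, hj⟩).support.tail.dropLast := by
          rw [← hsupp_eq]; exact hz
        exact hdisj _ _ hidx z hz hz'
      · -- P i transferred, P j = e₀
        rw [hP] at hPij
        simp only [dif_pos hi, dif_neg hj] at hPij
        have : s(u, v) ∈ ((p ⟨i, hi⟩).transfer H (hedges _)).edges := by
          rw [hPij, he₀]
          simp
        rw [Walk.edges_transfer] at this
        exact hE' ((p ⟨i, hi⟩).edges_subset_edgeSet this)
      · rw [hP] at hPij
        simp only [dif_neg hi, dif_pos hj] at hPij
        have : s(u, v) ∈ ((p ⟨j, hj⟩).transfer H (hedges _)).edges := by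
          rw [← hPij, he₀]
          simp
        rw [Walk.edges_transfer] at this
        exact hE' ((p ⟨j, hj⟩).edges_subset_edgeSet this)
      · exact hij (Fin.ext (by omega))
    · intro i j hij z hz1 hz2
      by_cases hi : (i : ℕ) < k - 1
      · by_cases hj : (j : ℕ) < k - 1
        · have hsi : (P i).support = (p ⟨i, hi⟩).support := hPsupp i hi
          have hsj : (P j).support = (p ⟨j, hj⟩).support := hPsupp j hj
          rw [hsi] at hz1
          rw [hsj] at hz2
          have hidx : (⟨i, hi⟩ : Fin (k-1)) ≠ ⟨j, hj⟩ := by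
            intro h
            rw [Fin.mk.injEq] at h
            exact hij (Fin.ext h)
          exact hdisj _ _ hidx z hz1 hz2
        · rw [hP] at hz2
          simp only [dif_neg hj] at hz2
          rw [he₀int] at hz2
          exact absurd hz2 List.not_mem_nil
      · rw [hP] at hz1
        simp only [dif_neg hi] at hz1
        rw [he₀int] at hz1
        exact absurd hz1 List.not_mem_nil
  · -- uv not an edge
    have hsep' : ∀ S : Set V, u ∉ S → v ∉ S → ¬ RA H S u v → k ≤ S.ncard := by
      intro S hu hv hnRA
      have h := hsep S ∅ hu hv (Set.empty_subset _) (by rwa [SimpleGraph.deleteEdges_empty])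
      simpa using h
    obtain ⟨p, hpath, hne, hdisj⟩ := mengerNoEdge huv hEuv hsep'
    refine ⟨p, hpath, ?_, hdisj⟩
    intro i j hij hpij
    obtain ⟨z, hz⟩ := List.exists_mem_of_ne_nil _ (hne i)
    have hz' : z ∈ (p j).support.tail.dropLast := by rw [← hpij]; exact hz
    exact hdisj i j hij z hz hz'


lemma reachable_induce {G : SimpleGraph V} {s : Set V} {a b : V} (w : G.Walk a b)
    (hs : ∀ z ∈ w.support, z ∈ s) :
    (G.induce s).Reachable ⟨a, hs a w.start_mem_support⟩ ⟨b, hs b w.end_mem_support⟩ := by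
  induction w with
  | nil => rfl
  | @cons a c b h p ih =>
    have hs' : ∀ z ∈ p.support, z ∈ s := fun z hz =>
      hs z (by rw [Walk.support_cons]; exact List.mem_cons_of_mem _ hz)
    have hadj : (G.induce s).Adj ⟨a, hs a ((Walk.cons h p).start_mem_support)⟩
        ⟨c, hs' c p.start_mem_support⟩ := by
      simp only [SimpleGraph.comap_adj, Function.Embedding.coe_subtype]
      exact h
    exact hadj.reachable.trans (ih hs')

lemma ra_of_induce_walk {G : SimpleGraph V} {s : Set V} {a b : ↥(sᶜ : Set V)}
    (w : (G.induce (sᶜ : Set V)).Walk a b) : RA G s ↑a ↑b := by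
  induction w with
  | @nil w0 => exact RA.nil (fun h => w0.2 h)
  | @cons a c b h p ih =>
    have hadj : G.Adj ↑a ↑c := by
      simpa using h
    exact (RA.single hadj (fun h => a.2 h) (fun h => c.2 h)).trans ih

lemma mem_interior_of_mem_support {G : SimpleGraph V} {u v z : V} (p : G.Walk u v)
    (hz : z ∈ p.support) (hzu : z ≠ u) (hzv : z ≠ v) :
    z ∈ p.support.tail.dropLast := by
  have hrev : ∃ l, p.support = l ++ [v] := by
    have h1 : p.reverse.support = v :: p.reverse.support.tail := Walk.support_eq_cons _
    rw [Walk.support_reverse] at h1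
    refine ⟨p.reverse.support.tail.reverse, ?_⟩
    have := congrArg List.reverse h1
    rw [List.reverse_reverse] at this
    rw [this]
    simp
  obtain ⟨l, hl⟩ := hrev
  have hcons : p.support = u :: p.support.tail := Walk.support_eq_cons _
  have hztail : z ∈ p.support.tail := by
    rw [hcons] at hz
    rcases List.mem_cons.mp hz with h | h
    · exact absurd h hzu
    · exact h
  cases l with
  | nil =>
    rw [hcons, List.nil_append] at hl
    obtain ⟨h1, h2⟩ := List.cons.inj hl
    rw [h2] at hztail
    exact absurd hztail List.not_mem_nil
  | cons a l' =>
    rw [hcons, List.cons_append] at hl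
    obtain ⟨h1, h2⟩ := List.cons.inj hl
    rw [h2, List.dropLast_concat]
    rw [h2] at hztail
    rcases List.mem_append.mp hztail with h | h
    · exact h
    · exact absurd (List.mem_singleton.mp h) hzv

lemma eq_single_edge {H : SimpleGraph V} {u v : V} {p : H.Walk u v} (hp : p.IsPath)
    (huv : u ≠ v) (he : s(u, v) ∈ p.edges) (h : H.Adj u v) :
    p = Walk.cons h Walk.nil := by
  cases p with
  | nil => simp at he
  | @cons _ c _ h' p' =>
    rw [Walk.edges_cons, List.mem_cons] at he
    rcases he with he | he
    · have hcv : c = v := by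
        rw [Sym2.eq_iff] at he
        rcases he with ⟨-, h2⟩ | ⟨h1, h2⟩
        · exact h2.symm
        · exact absurd h2.symm huv
      subst hcv
      have : p' = Walk.nil := Walk.isPath_iff_eq_nil.mp
        ((Walk.cons_isPath_iff _ _).mp hp).1
      subst this
      rfl
    · exfalso
      have : u ∈ p'.support := Walk.fst_mem_support_of_mem_edges p' he
      exact ((Walk.cons_isPath_iff _ _).mp hp).2 this


lemma shared_edge_contradiction {H : SimpleGraph V} {u v : V} (huv : u ≠ v)
    {k : ℕ} {p : Fin k → H.Walk u v} (hpath : ∀ i, (p i).IsPath)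
    (hdist : ∀ i j, i ≠ j → p i ≠ p j)
    (hdisj : ∀ i j, i ≠ j → ∀ z, z ∈ (p i).support.tail.dropLast →
      z ∉ (p j).support.tail.dropLast)
    {i j : Fin k} (hij : i ≠ j) {e : Sym2 V} (hei : e ∈ (p i).edges)
    (hej : e ∈ (p j).edges) : False := by
  induction e using Sym2.ind with
  | _ z1 z2 =>
  have hadj : H.Adj z1 z2 := (SimpleGraph.mem_edgeSet H).mp ((p i).edges_subset_edgeSet hei)
  have hzz : z1 ≠ z2 := hadj.ne
  have hint : ∀ (z : V), z ≠ u → z ≠ v → z ∈ (p i).support → z ∈ (p j).support → False := by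
    intro z hzu hzv hzi hzj
    exact hdisj i j hij z (mem_interior_of_mem_support _ hzi hzu hzv)
      (mem_interior_of_mem_support _ hzj hzu hzv)
  by_cases h1u : z1 = u
  · by_cases h2v : z2 = v
    · -- e = s(u,v)
      subst h1u; subst h2v
      have h1 : p i = Walk.cons hadj Walk.nil := eq_single_edge (hpath i) huv hei hadj
      have h2 : p j = Walk.cons hadj Walk.nil := eq_single_edge (hpath j) huv hej hadj
      exact hdist i j hij (h1.trans h2.symm)
    · by_cases h2u : z2 = u
      · exact hzz (h1u.trans h2u.symm)
      · exact hint z2 h2u h2v (Walk.snd_mem_support_of_mem_edges _ hei)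
          (Walk.snd_mem_support_of_mem_edges _ hej)
  · by_cases h1v : z1 = v
    · by_cases h2u : z2 = u
      · -- e = s(v, u) = s(u, v)
        subst h1v; subst h2u
        have hsw : s(z2, z1) = s(z1, z2) := Sym2.eq_swap
        have h1 : p i = Walk.cons hadj.symm Walk.nil :=
          eq_single_edge (hpath i) huv (hsw ▸ hei) hadj.symm
        have h2 : p j = Walk.cons hadj.symm Walk.nil :=
          eq_single_edge (hpath j) huv (hsw ▸ hej) hadj.symm
        exact hdist i j hij (h1.trans h2.symm)
      · by_cases h2v : z2 = v
        · exact hzz (h1v.trans h2v.symm)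
        · exact hint z2 h2u h2v (Walk.snd_mem_support_of_mem_edges _ hei)
            (Walk.snd_mem_support_of_mem_edges _ hej)
    · exact hint z1 h1u h1v (Walk.fst_mem_support_of_mem_edges _ hei)
        (Walk.fst_mem_support_of_mem_edges _ hej)

end Menger

/-- For a finite graph `G` on at least two vertices with edge-coloring `f`
and positive integers `k`, `ℓ`, the following are equivalent:
(i) `G` is edge-`ℓ`-color-avoiding `k`-vertex-connected;
(ii) after the removal of all edges of any at most `ℓ` colors, there remain at least `k`
     pairwise internally vertex-disjoint paths between any two distinct vertices;
(iii) there is no mixed cut of the form `V' ∪ E' ∪ E''` with `|V'| + |E'| ≤ k - 1` and the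
      edges of `E''` using at most `ℓ` colors. -/
theorem stmt2 [Fintype V] [Fintype C] (G : SimpleGraph V) (f : Sym2 V → C)
    (k ℓ : ℕ) (hk : 0 < k) (hℓ : 0 < ℓ) (hV : ∃ u v : V, u ≠ v) :
    List.TFAE
      [ ∀ C' : Finset C, C'.card ≤ ℓ → VertexConnected (G.deleteEdges {e | f e ∈ C'}) k,
        ∀ C' : Finset C, C'.card ≤ ℓ → ∀ u v : V, u ≠ v →
          InternallyDisjointPaths (G.deleteEdges {e | f e ∈ C'}) u v k,
        ¬ ∃ (V' : Set V) (E' E'' : Set (Sym2 V)), E' ∪ E'' ⊆ G.edgeSet ∧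
            V'.ncard + E'.ncard ≤ k - 1 ∧ (f '' E'').ncard ≤ ℓ ∧
            ¬ ((G.deleteEdges (E' ∪ E'')).induce V'ᶜ).Preconnected ] := by
  classical
  letI : DecidableEq V := Classical.decEq V
  tfae_have 1 → 2 := by
    intro h C' hC' u v huv
    exact (h C' hC').2 u v huv
  tfae_have 2 → 1 := by
    intro h C' hC'
    exact ⟨hV, h C' hC'⟩
  tfae_have 2 → 3 := by
    intro h2
    rintro ⟨V', E', E'', hsub, hcard, hcol, hnpc⟩
    have hDfin : (f '' E'').Finite := Set.toFinite _
    set C' : Finset C := hDfin.toFinset with hC'def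
    have hC'card : C'.card ≤ ℓ := by
      rw [hC'def, ← Set.ncard_eq_toFinset_card _ hDfin]
      exact hcol
    rw [SimpleGraph.Preconnected] at hnpc
    push_neg at hnpc
    obtain ⟨a, b, hnreach⟩ := hnpc
    have huv : (a : V) ≠ (b : V) := by
      intro h
      apply hnreach
      have hab : a = b := Subtype.ext h
      rw [hab]
    obtain ⟨p, hpath, hdist, hdisj⟩ := h2 C' hC'card (a : V) (b : V) huv
    -- a good path avoiding V' internally and E' edge-wise
    by_cases hgood : ∃ i : Fin k,
        (∀ z ∈ V', z ∉ (p i).support.tail.dropLast) ∧ (∀ e ∈ E', e ∉ (p i).edges)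
    · obtain ⟨i₀, hiV, hiE⟩ := hgood
      have hGd : ∀ e ∈ (p i₀).edges, e ∈ (G.deleteEdges (E' ∪ E'')).edgeSet := by
        intro e he
        have heH : e ∈ (G.deleteEdges {e | f e ∈ C'}).edgeSet :=
          (p i₀).edges_subset_edgeSet he
        rw [SimpleGraph.edgeSet_deleteEdges] at heH
        rw [SimpleGraph.edgeSet_deleteEdges]
        refine ⟨heH.1, ?_⟩
        rintro (h | h)
        · exact hiE e h he
        · refine heH.2 ?_
          simp only [Set.mem_setOf_eq, hC'def, Set.Finite.mem_toFinset]
          exact Set.mem_image_of_mem f h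
      have hsupp : ∀ z ∈ ((p i₀).transfer _ hGd).support, z ∈ (V'ᶜ : Set V) := by
        intro z hz
        rw [Walk.support_transfer] at hz
        intro hzV
        by_cases hzu : z = (a : V)
        · exact a.2 (hzu ▸ hzV)
        · by_cases hzv : z = (b : V)
          · exact b.2 (hzv ▸ hzV)
          · exact hiV z hzV (mem_interior_of_mem_support _ hz hzu hzv)
      have hreach := reachable_induce ((p i₀).transfer _ hGd) hsupp
      rw [Subtype.coe_eta, Subtype.coe_eta] at hreach
      exact hnreach hreach
    · -- counting contradiction
      push_neg at hgood
      have hbad : ∀ i : Fin k, (∃ z ∈ V', z ∈ (p i).support.tail.dropLast) ∨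
          (∃ e ∈ E', e ∈ (p i).edges) := by
        intro i
        by_cases hA : ∃ z ∈ V', z ∈ (p i).support.tail.dropLast
        · exact Or.inl hA
        · push_neg at hA
          obtain ⟨e, he, hee⟩ := hgood i hA
          exact Or.inr ⟨e, he, hee⟩
      letI : Fintype ↥V' := (Set.toFinite V').fintype
      letI : Fintype ↥E' := (Set.toFinite E').fintype
      set φ : Fin k → ↥V' ⊕ ↥E' := fun i =>
        if h : ∃ z ∈ V', z ∈ (p i).support.tail.dropLast then
          Sum.inl ⟨h.choose, h.choose_spec.1⟩
        else
          Sum.inr ⟨((hbad i).resolve_left h).choose,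
            ((hbad i).resolve_left h).choose_spec.1⟩ with hφdef
      have hφinj : Function.Injective φ := by
        intro i j hφij
        by_contra hij
        by_cases hi : ∃ z ∈ V', z ∈ (p i).support.tail.dropLast <;>
          by_cases hj : ∃ z ∈ V', z ∈ (p j).support.tail.dropLast
        · rw [hφdef] at hφij
          simp only [dif_pos hi, dif_pos hj] at hφij
          have hz : hi.choose = hj.choose := congrArg Subtype.val (Sum.inl.inj hφij)
          refine hdisj i j hij _ hi.choose_spec.2 ?_
          rw [hz]
          exact hj.choose_spec.2
        · rw [hφdef] at hφij
          simp only [dif_pos hi, dif_neg hj] at hφij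
          exact Sum.inl_ne_inr hφij
        · rw [hφdef] at hφij
          simp only [dif_neg hi, dif_pos hj] at hφij
          exact Sum.inr_ne_inl hφij
        · rw [hφdef] at hφij
          simp only [dif_neg hi, dif_neg hj] at hφij
          have hz : ((hbad i).resolve_left hi).choose = ((hbad j).resolve_left hj).choose :=
            congrArg Subtype.val (Sum.inr.inj hφij)
          refine shared_edge_contradiction huv hpath hdist hdisj hij
            ((hbad i).resolve_left hi).choose_spec.2 ?_
          rw [hz]
          exact ((hbad j).resolve_left hj).choose_spec.2
      have hcount := Fintype.card_le_of_injective φ hφinj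
      rw [Fintype.card_fin, Fintype.card_sum] at hcount
      have h1 : Fintype.card ↥V' = V'.ncard := by
        rw [← Nat.card_eq_fintype_card, Nat.card_coe_set_eq]
      have h2 : Fintype.card ↥E' = E'.ncard := by
        rw [← Nat.card_eq_fintype_card, Nat.card_coe_set_eq]
      rw [h1, h2] at hcount
      omega
  tfae_have 3 → 2 := by
    intro h3 C' hC' u v huv
    apply mengerMixed huv
    intro S F hu hv hF hnot
    by_contra hlt
    push_neg at hlt
    refine h3 ⟨S, F, {e | e ∈ G.edgeSet ∧ f e ∈ C'}, ?_, ?_, ?_, ?_⟩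
    · rintro e (he | he)
      · have := hF he
        rw [SimpleGraph.edgeSet_deleteEdges] at this
        exact this.1
      · exact he.1
    · omega
    · have hsub' : f '' {e | e ∈ G.edgeSet ∧ f e ∈ C'} ⊆ (C' : Set C) := by
        rintro c ⟨e, he, rfl⟩
        exact he.2
      calc (f '' {e | e ∈ G.edgeSet ∧ f e ∈ C'}).ncard
          ≤ (C' : Set C).ncard := Set.ncard_le_ncard hsub' (Set.toFinite _)
        _ = C'.card := Set.ncard_coe_finset C'
        _ ≤ ℓ := hC'
    · intro hpc
      have hreach := hpc ⟨u, hu⟩ ⟨v, hv⟩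
      obtain ⟨w⟩ := hreach
      have hRA := ra_of_induce_walk w
      have heq : G.deleteEdges (F ∪ {e | e ∈ G.edgeSet ∧ f e ∈ C'})
          = (G.deleteEdges {e | f e ∈ C'}).deleteEdges F := by
        ext a b
        simp only [SimpleGraph.deleteEdges_adj, Set.mem_union, Set.mem_setOf_eq,
          SimpleGraph.mem_edgeSet]
        tauto
      rw [heq] at hRA
      exact hnot hRA
  tfae_finish

end Stmt2
end

section
/- Let G be a vertex-colored graph on at least two vertices, C a finite color set, and f : V(G) → C the vertex-coloring. Then the following are equivalent: (i) G is internally vertex-1-color-avoiding 1-connected; (ii) there exists no monochromatic vertex cut (including the empty set) in G; (iii) there exists no inclusion-wise minimal monochromatic vertex cut (including the empty set) in G. -/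
namespace Stmt4

variable {V : Type*} {C : Type*}

/-- A vertex cut of `G`: a set of vertices whose removal disconnects the graph
(the empty set counts as a vertex cut when the graph is already disconnected). -/
def IsVertexCut (G : SimpleGraph V) (S : Set V) : Prop :=
  ¬ (G.induce Sᶜ).Preconnected

/-- A set of vertices is monochromatic (w.r.t. the vertex-coloring `f`)
if all its vertices receive the same color. -/
def Monochromatic (f : V → C) (S : Set V) : Prop :=
  ∃ c : C, ∀ v ∈ S, f v = c

lemma getLast_tail_support {G : SimpleGraph V} {u v : V} (p : G.Walk u v)
    (h : p.support.tail ≠ []) : p.support.tail.getLast h = v := by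
  cases p with
  | nil => simp at h
  | cons ha q => exact q.getLast_support

/-- Decomposition of the support of a walk into tail.dropLast. -/
lemma tail_decomp {G : SimpleGraph V} {u v : V} (p : G.Walk u v)
    (h : p.support.tail ≠ []) :
    p.support.tail = p.support.tail.dropLast ++ [v] := by
  conv_lhs => rw [← List.dropLast_concat_getLast h]
  rw [getLast_tail_support p h]

lemma mem_support_cases {G : SimpleGraph V} {u v : V} {p : G.Walk u v} {x : V}
    (hx : x ∈ p.support) : x = u ∨ x = v ∨ x ∈ p.support.tail.dropLast := by
  rw [p.support_eq_cons] at hx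
  rcases List.mem_cons.mp hx with rfl | hx
  · exact Or.inl rfl
  · have hne : p.support.tail ≠ [] := List.ne_nil_of_mem hx
    rw [tail_decomp p hne, List.mem_append] at hx
    rcases hx with hx | hx
    · exact Or.inr (Or.inr hx)
    · simp at hx; exact Or.inr (Or.inl hx)

/-- Internal vertices of a path are distinct from the endpoints. -/
lemma internal_ne {G : SimpleGraph V} {u v : V} {p : G.Walk u v} (hp : p.IsPath)
    {x : V} (hx : x ∈ p.support.tail.dropLast) : x ≠ u ∧ x ≠ v := by
  have hnd : p.support.Nodup := hp.support_nodup
  have hcons : p.support = u :: p.support.tail := p.support_eq_cons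
  have hxt : x ∈ p.support.tail := List.dropLast_subset _ hx
  have hndt : p.support.tail.Nodup ∧ u ∉ p.support.tail := by
    rw [hcons, List.nodup_cons] at hnd
    exact ⟨hnd.2, hnd.1⟩
  constructor
  · rintro rfl; exact hndt.2 hxt
  · intro hxv
    have hne : p.support.tail ≠ [] := List.ne_nil_of_mem hxt
    have := hndt.1
    rw [tail_decomp p hne] at this
    exact (List.disjoint_of_nodup_append this) hx (by simp [hxv])

/-- If a walk's support lies in `s`, its endpoints are reachable in the induced graph. -/
lemma reachable_induce_of_walk {G : SimpleGraph V} {u v : V} (p : G.Walk u v)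
    {s : Set V} (hs : ∀ x ∈ p.support, x ∈ s) (hu : u ∈ s) (hv : v ∈ s) :
    (G.induce s).Reachable ⟨u, hu⟩ ⟨v, hv⟩ := by
  have hc := p.connected_induce_support
  have hr : (G.induce {x | x ∈ p.support}).Reachable
      ⟨u, p.start_mem_support⟩ ⟨v, p.end_mem_support⟩ := hc.preconnected _ _
  have hle : {x | x ∈ p.support} ⊆ s := fun x hx => hs x hx
  exact hr.map (G.induceHomOfLE hle).toHom

/-- For a finite graph `G` on at least two vertices with vertex-coloring `f`,
the following are equivalent:
(i) `G` is internally vertex-1-color-avoiding 1-connected (for every color `c`, any two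
    vertices are joined by a path none of whose internal vertices has color `c`);
(ii) there is no monochromatic vertex cut (including the empty set);
(iii) there is no inclusion-wise minimal monochromatic vertex cut (including the empty set). -/
theorem stmt4 [Fintype V] [Fintype C] (G : SimpleGraph V) (f : V → C)
    (hV : ∃ u v : V, u ≠ v) :
    List.TFAE
      [ ∀ (c : C) (u v : V), ∃ p : G.Walk u v, p.IsPath ∧
          ∀ x ∈ p.support.tail.dropLast, f x ≠ c,
        ¬ ∃ S : Set V, IsVertexCut G S ∧ Monochromatic f S,
        ¬ ∃ S : Set V, IsVertexCut G S ∧ Monochromatic f S ∧ ∀ T ⊂ S, ¬ IsVertexCut G T ] := by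
  classical
  tfae_have 1 → 2 := by
    intro h1
    rintro ⟨S, hcut, c, hmono⟩
    apply hcut
    rintro ⟨u, hu⟩ ⟨v, hv⟩
    obtain ⟨p, hp, hint⟩ := h1 c u v
    refine reachable_induce_of_walk p ?_ hu hv
    intro x hx
    rcases mem_support_cases hx with rfl | rfl | hx'
    · exact hu
    · exact hv
    · intro hxS
      exact hint x hx' (hmono x hxS)
  tfae_have 2 → 3 := by
    rintro h2 ⟨S, hcut, hmono, _⟩
    exact h2 ⟨S, hcut, hmono⟩
  tfae_have 3 → 2 := by
    rintro h3 ⟨S, hcut, hmono⟩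
    have hwf : WellFoundedLT (Set V) := inferInstance
    obtain ⟨m, ⟨hmS, hmcut⟩, hmin⟩ := hwf.wf.has_min
      {T | T ⊆ S ∧ IsVertexCut G T} ⟨S, le_refl _, hcut⟩
    refine h3 ⟨m, hmcut, ?_, ?_⟩
    · obtain ⟨c, hc⟩ := hmono
      exact ⟨c, fun x hx => hc x (hmS hx)⟩
    · intro T hT hTcut
      exact hmin T ⟨hT.subset.trans hmS, hTcut⟩ hT
  tfae_have 2 → 1 := by
    intro h2
    by_contra hni
    push_neg at hni
    obtain ⟨c, u, v, hno⟩ := hni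
    have huv : u ≠ v := by
      rintro rfl
      obtain ⟨x, hx, -⟩ := hno SimpleGraph.Walk.nil (by simp)
      simp at hx
    set S : Set V := {x | f x = c ∧ x ≠ u ∧ x ≠ v} with hS
    apply h2
    refine ⟨S, ?_, c, fun x hx => hx.1⟩
    intro hpre
    have hu : u ∈ Sᶜ := by simp [hS]
    have hv : v ∈ Sᶜ := by simp [hS]
    obtain ⟨w⟩ := hpre ⟨u, hu⟩ ⟨v, hv⟩
    have hp := w.toPath.2
    set q : (G.induce Sᶜ).Walk ⟨u, hu⟩ ⟨v, hv⟩ := w.toPath.1 with hq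
    set p : G.Walk u v := q.map ((SimpleGraph.Embedding.induce (G := G) Sᶜ)).toHom with hpdef
    have hpath : p.IsPath :=
      SimpleGraph.Walk.map_isPath_of_injective ((SimpleGraph.Embedding.induce (G := G) Sᶜ)).injective hp
    obtain ⟨x, hx, hfx⟩ := hno p hpath
    have hne := internal_ne hpath hx
    have hxmem : x ∈ p.support := by
      have h1 : x ∈ p.support.tail := List.dropLast_subset _ hx
      rw [p.support_eq_cons]; exact List.mem_cons_of_mem _ h1
    have : x ∈ Sᶜ := by
      replace hxmem : x ∈ (q.map (SimpleGraph.Embedding.induce (G := G) Sᶜ).toHom).support := hxmem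
      rw [SimpleGraph.Walk.support_map] at hxmem
      obtain ⟨y, _, rfl⟩ := List.mem_map.mp hxmem
      exact y.2
    exact this ⟨hfx, hne.1, hne.2⟩
  tfae_finish

end Stmt4
end

section
/- Let G be a vertex-colored graph in which every vertex v has a neighbor whose color is different from that of v. Then G is vertex-1-color-avoiding 1-connected if and only if G is internally vertex-1-color-avoiding 1-connected. -/
namespace Stmt5

variable {V : Type*} {C : Type*}

/-- `G` is vertex-1-color-avoiding 1-connected: for every color `c`, the graph obtained by
deleting all vertices of color `c` is connected or has at most one vertex. -/
def VertexCAConnected (G : SimpleGraph V) (f : V → C) : Prop :=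
  ∀ c : C, (G.induce {v : V | f v ≠ c}).Connected ∨ ({v : V | f v ≠ c} : Set V).Subsingleton

/-- `G` is internally vertex-1-color-avoiding 1-connected: for every color `c`, any two
vertices are joined by a path none of whose internal vertices has color `c`. -/
def InternallyVertexCAConnected (G : SimpleGraph V) (f : V → C) : Prop :=
  ∀ (c : C) (u v : V), ∃ p : G.Walk u v, p.IsPath ∧
    ∀ x ∈ p.support.tail.dropLast, f x ≠ c

lemma list_aux {α : Type*} {l : List α} {x : α} (h : l ≠ []) (hx : x ∈ l) :
    x = l.head h ∨ x = l.getLast h ∨ x ∈ l.tail.dropLast := by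
  match l with
  | a :: t =>
    rcases List.mem_cons.mp hx with rfl | hxt
    · exact Or.inl rfl
    · have ht : t ≠ [] := List.ne_nil_of_mem hxt
      have hxt' : x ∈ t.dropLast ++ [t.getLast ht] := by
        rw [List.dropLast_concat_getLast ht]; exact hxt
      rcases List.mem_append.mp hxt' with h1 | h2
      · exact Or.inr (Or.inr h1)
      · refine Or.inr (Or.inl ?_)
        rw [List.getLast_cons ht]
        simpa using h2

lemma concat_isPath {G : SimpleGraph V} {u v w : V} {p : G.Walk u v} (h : G.Adj v w)
    (hp : p.IsPath) (hw : w ∉ p.support) : (p.concat h).IsPath := by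
  have h1 : (SimpleGraph.Walk.cons h.symm p.reverse).IsPath := by
    rw [SimpleGraph.Walk.cons_isPath_iff]
    exact ⟨hp.reverse, by simpa using hw⟩
  have h2 := h1.reverse
  rwa [SimpleGraph.Walk.reverse_cons, SimpleGraph.Walk.reverse_reverse] at h2

/-- If the support of a walk lies in `S`, endpoints are reachable in the induced graph. -/
lemma reach_induce {G : SimpleGraph V} {S : Set V} {u v : V} (p : G.Walk u v)
    (hp : ∀ x ∈ p.support, x ∈ S) (hu : u ∈ S) (hv : v ∈ S) :
    (G.induce S).Reachable ⟨u, hu⟩ ⟨v, hv⟩ := by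
  induction p with
  | nil => rfl
  | @cons a b c hab p ih =>
    have hb : b ∈ S := hp b (by simp)
    have h1 : (G.induce S).Adj ⟨a, hu⟩ ⟨b, hb⟩ := by simpa using hab
    exact h1.reachable.trans (ih (fun x hx => hp x (by simp [hx])) hb hv)

/-- A path in `G` between two vertices of `S` with support in `S`. -/
lemma path_in_S {G : SimpleGraph V} {S : Set V} {u v : V}
    (hconn : (G.induce S).Connected ∨ S.Subsingleton) (hu : u ∈ S) (hv : v ∈ S) :
    ∃ p : G.Walk u v, p.IsPath ∧ ∀ x ∈ p.support, x ∈ S := by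
  classical
  rcases hconn with hc | hs
  · obtain ⟨q⟩ := hc.preconnected ⟨u, hu⟩ ⟨v, hv⟩
    let p : G.Walk u v := q.map (SimpleGraph.Embedding.induce S).toHom
    have hsup : ∀ x ∈ p.support, x ∈ S := by
      intro x hx
      rw [show p.support = q.support.map _ from SimpleGraph.Walk.support_map _ _] at hx
      obtain ⟨⟨y, hy⟩, _, rfl⟩ := List.mem_map.mp hx
      exact hy
    exact ⟨p.toPath, p.toPath.property,
      fun x hx => hsup x (p.support_toPath_subset hx)⟩
  · have : u = v := hs hu hv
    subst this
    exact ⟨SimpleGraph.Walk.nil, SimpleGraph.Walk.IsPath.nil, by simp [hu]⟩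

/-- If every vertex of a finite vertex-colored graph `G` has a neighbor of a
different color, then `G` is vertex-1-color-avoiding 1-connected if and only if it is
internally vertex-1-color-avoiding 1-connected. -/
theorem stmt5 [Fintype V] [Fintype C] (G : SimpleGraph V) (f : V → C)
    (h : ∀ v : V, ∃ u : V, G.Adj v u ∧ f u ≠ f v) :
    VertexCAConnected G f ↔ InternallyVertexCAConnected G f := by
  constructor
  · intro hca c u v
    by_cases huv : u = v
    · subst huv
      exact ⟨SimpleGraph.Walk.nil, SimpleGraph.Walk.IsPath.nil, by simp⟩
    set S : Set V := {v : V | f v ≠ c} with hS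
    by_cases hu : f u = c <;> by_cases hv : f v = c
    · -- both endpoints colored c
      obtain ⟨u', hadj_u, hfu'⟩ := h u
      obtain ⟨v', hadj_v, hfv'⟩ := h v
      rw [hu] at hfu'; rw [hv] at hfv'
      obtain ⟨P, hP, hPS⟩ := path_in_S (hca c) (show u' ∈ S from hfu') (show v' ∈ S from hfv')
      have hvP : v ∉ P.support := fun hmem => (hPS v hmem) hv
      have huP : u ∉ (P.concat hadj_v.symm).support := by
        rw [SimpleGraph.Walk.support_concat]
        simp only [List.concat_eq_append, List.mem_append, List.mem_singleton]
        rintro (hmem | rfl)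
        · exact (hPS u hmem) hu
        · exact huv rfl
      refine ⟨SimpleGraph.Walk.cons hadj_u (P.concat hadj_v.symm), ?_, ?_⟩
      · rw [SimpleGraph.Walk.cons_isPath_iff]
        exact ⟨concat_isPath _ hP hvP, huP⟩
      · intro x hx
        rw [SimpleGraph.Walk.support_cons] at hx
        simp only [List.tail_cons] at hx
        rw [SimpleGraph.Walk.support_concat] at hx
        rw [show (P.support ++ [v]).dropLast = P.support from by
          rw [List.dropLast_append_of_ne_nil (by simp)]; simp] at hx
        exact hPS x hx
    · -- f u = c, f v ≠ c
      obtain ⟨u', hadj_u, hfu'⟩ := h u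
      rw [hu] at hfu'
      obtain ⟨P, hP, hPS⟩ := path_in_S (hca c) (show u' ∈ S from hfu') (show v ∈ S from hv)
      have huP : u ∉ P.support := fun hmem => (hPS u hmem) hu
      refine ⟨SimpleGraph.Walk.cons hadj_u P, ?_, ?_⟩
      · rw [SimpleGraph.Walk.cons_isPath_iff]; exact ⟨hP, huP⟩
      · intro x hx
        rw [SimpleGraph.Walk.support_cons] at hx
        simp only [List.tail_cons] at hx
        exact hPS x (List.dropLast_subset _ hx)
    · -- f u ≠ c, f v = c
      obtain ⟨v', hadj_v, hfv'⟩ := h v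
      rw [hv] at hfv'
      obtain ⟨P, hP, hPS⟩ := path_in_S (hca c) (show u ∈ S from hu) (show v' ∈ S from hfv')
      have hvP : v ∉ P.support := fun hmem => (hPS v hmem) hv
      refine ⟨P.concat hadj_v.symm, ?_, ?_⟩
      · exact concat_isPath _ hP hvP
      · intro x hx
        rw [SimpleGraph.Walk.support_concat,
          P.support_eq_cons] at hx
        simp only [List.cons_append, List.tail_cons] at hx
        rw [show (P.support.tail ++ [v]).dropLast = P.support.tail from by
          rw [List.dropLast_append_of_ne_nil (by simp)]; simp] at hx
        exact hPS x (List.tail_subset _ hx)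
    · -- both in S
      obtain ⟨P, hP, hPS⟩ := path_in_S (hca c) (show u ∈ S from hu) (show v ∈ S from hv)
      exact ⟨P, hP, fun x hx => hPS x (List.tail_subset _ (List.dropLast_subset _ hx))⟩
  · intro hint c
    set S : Set V := {v : V | f v ≠ c} with hS
    by_cases hs : S.Subsingleton
    · exact Or.inr hs
    left
    rw [Set.not_subsingleton_iff] at hs
    rw [SimpleGraph.connected_iff]
    refine ⟨?_, hs.nonempty.to_subtype⟩
    · rintro ⟨a, ha⟩ ⟨b, hb⟩
      obtain ⟨p, hp, hint'⟩ := hint c a b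
      have hsup : ∀ x ∈ p.support, x ∈ S := by
        intro x hx
        rcases list_aux (by simp) hx with h1 | h2 | h3
        · rw [h1, p.head_support]; exact ha
        · rw [h2, p.getLast_support]; exact hb
        · exact hint' x h3
      exact reach_induce p hsup ha hb

end Stmt5
end

section
/- Let D be a vertex-colored digraph in which every vertex v has an in-neighbor and an out-neighbor whose colors are different from that of v. Then D is vertex-1-color-avoiding strongly 1-connected if and only if D is internally vertex-1-color-avoiding strongly 1-connected. -/
namespace Stmt6

universe u

/-- A directed walk in the digraph given by the arc relation `A`. -/
inductive DWalk {V : Type u} (A : V → V → Prop) : V → V → Type u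
  | nil {v : V} : DWalk A v v
  | cons {u v w : V} (h : A u v) (p : DWalk A v w) : DWalk A u w

/-- The list of vertices visited by a directed walk (in order). -/
def DWalk.support {V : Type u} {A : V → V → Prop} : {u v : V} → DWalk A u v → List V
  | u, _, .nil => [u]
  | u, _, .cons _ p => u :: p.support

variable {V : Type u} {C : Type*}

/-- `D` is vertex-1-color-avoiding strongly 1-connected: for every color `c`, the digraph
obtained by deleting all vertices of color `c` is strongly connected or has at most one
vertex. -/
def VertexCAStronglyConnected (A : V → V → Prop) (f : V → C) : Prop :=
  ∀ c : C, Subsingleton {v : V // f v ≠ c} ∨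
    ∀ u v : {v : V // f v ≠ c},
      Nonempty (DWalk (fun x y : {v : V // f v ≠ c} => A x.1 y.1) u v)

/-- `D` is internally vertex-1-color-avoiding strongly 1-connected: for every color `c` and
every ordered pair of vertices `(u, v)`, there is a directed path from `u` to `v` none of
whose internal vertices has color `c`. -/
def InternallyVertexCAStronglyConnected (A : V → V → Prop) (f : V → C) : Prop :=
  ∀ (c : C) (u v : V), ∃ p : DWalk A u v, p.support.Nodup ∧
    ∀ x ∈ p.support.tail.dropLast, f x ≠ c

section Aux

variable {A : V → V → Prop}

lemma DWalk.support_eq_cons : ∀ {u v : V} (p : DWalk A u v), p.support = u :: p.support.tail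
  | _, _, .nil => rfl
  | _, _, .cons _ _ => rfl

lemma DWalk.start_mem {u v : V} (p : DWalk A u v) : u ∈ p.support := by
  rw [p.support_eq_cons]; exact List.mem_cons_self

lemma DWalk.support_eq_concat : ∀ {u v : V} (p : DWalk A u v), ∃ l, p.support = l ++ [v]
  | _, _, .nil => ⟨[], rfl⟩
  | u, _, .cons _ p => by
      obtain ⟨l, hl⟩ := p.support_eq_concat
      exact ⟨u :: l, by simp [DWalk.support, hl]⟩

lemma DWalk.mem_support_cases {u v : V} (p : DWalk A u v) {x : V} (hx : x ∈ p.support) :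
    x = u ∨ x = v ∨ x ∈ p.support.tail.dropLast := by
  obtain ⟨l, hl⟩ := p.support_eq_concat
  have hc := p.support_eq_cons
  by_cases hxu : x = u
  · exact Or.inl hxu
  by_cases hxv : x = v
  · exact Or.inr (Or.inl hxv)
  refine Or.inr (Or.inr ?_)
  rw [hc] at hl hx
  cases l with
  | nil =>
      simp only [List.nil_append] at hl
      have ht : p.support.tail = [] := by
        have := congrArg List.tail hl; simpa using this
      rw [ht] at hx
      simp at hx
      exact absurd hx hxu
  | cons a l' =>
      have ht : p.support.tail = l' ++ [v] := by
        have := congrArg List.tail hl; simpa using this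
      rw [ht] at hx ⊢
      rw [List.dropLast_concat]
      rcases List.mem_cons.1 hx with h1 | h1
      · exact absurd h1 hxu
      · rcases List.mem_append.1 h1 with h2 | h2
        · exact h2
        · simp at h2; exact absurd h2 hxv

lemma DWalk.exists_lift {P : V → Prop} :
    ∀ {u v : V} (p : DWalk A u v), (∀ x ∈ p.support, P x) →
    ∀ (hu : P u) (hv : P v),
      Nonempty (DWalk (fun x y : {v : V // P v} => A x.1 y.1) ⟨u, hu⟩ ⟨v, hv⟩)
  | _, _, .nil, _, _, _ => ⟨.nil⟩
  | _, _, .cons h p, hall, hu, hv => by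
      have hw : P _ := hall _ (List.mem_cons_of_mem _ p.start_mem)
      obtain ⟨q⟩ := p.exists_lift (fun x hx => hall x (List.mem_cons_of_mem _ hx)) hw hv
      exact ⟨.cons h q⟩

lemma DWalk.exists_down {P : V → Prop} :
    ∀ {a b : {v : V // P v}} (_ : DWalk (fun x y : {v : V // P v} => A x.1 y.1) a b),
      ∃ q : DWalk A a.1 b.1, ∀ x ∈ q.support, P x
  | a, _, .nil => ⟨.nil, by intro x hx; simp [DWalk.support] at hx; subst hx; exact a.2⟩
  | a, b, .cons h p => by
      obtain ⟨q, hq⟩ := p.exists_down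
      refine ⟨.cons h q, ?_⟩
      intro x hx
      rcases List.mem_cons.1 hx with rfl | hx'
      · exact a.2
      · exact hq x hx'

lemma DWalk.exists_dropUntil {x : V} :
    ∀ {u v : V} (p : DWalk A u v), x ∈ p.support →
      ∃ r : DWalk A x v, r.support <:+ p.support
  | _, _, .nil, hx => by
      simp [DWalk.support] at hx
      subst hx
      exact ⟨.nil, List.suffix_rfl⟩
  | u, v, .cons h p, hx => by
      rcases List.mem_cons.1 hx with rfl | hx'
      · exact ⟨.cons h p, List.suffix_rfl⟩
      · obtain ⟨r, hr⟩ := p.exists_dropUntil hx'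
        exact ⟨r, hr.trans (List.suffix_cons _ _)⟩

lemma DWalk.exists_path :
    ∀ {u v : V} (p : DWalk A u v),
      ∃ q : DWalk A u v, q.support.Nodup ∧ ∀ x ∈ q.support, x ∈ p.support
  | _, _, .nil => ⟨.nil, List.nodup_singleton _, fun _ hx => hx⟩
  | u, v, .cons h p => by
      obtain ⟨q, hnd, hsub⟩ := p.exists_path
      by_cases hu : u ∈ q.support
      · obtain ⟨r, hr⟩ := q.exists_dropUntil hu
        exact ⟨r, hnd.sublist hr.sublist,
          fun x hx => List.mem_cons_of_mem _ (hsub x (hr.subset hx))⟩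
      · refine ⟨.cons h q, ?_, ?_⟩
        · exact List.nodup_cons.2 ⟨hu, hnd⟩
        · intro x hx
          rcases List.mem_cons.1 hx with rfl | hx'
          · exact List.mem_cons_self
          · exact List.mem_cons_of_mem _ (hsub x hx')

/-- Append a single arc at the end of a walk. -/
def DWalk.concat : ∀ {u v w : V}, DWalk A u v → A v w → DWalk A u w
  | _, _, _, .nil, h => .cons h .nil
  | _, _, _, .cons a p, h => .cons a (p.concat h)

lemma DWalk.support_concat : ∀ {u v w : V} (p : DWalk A u v) (h : A v w),
    (p.concat h).support = p.support ++ [w]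
  | _, _, _, .nil, _ => rfl
  | _, _, _, .cons a p, h => by
      simp [DWalk.concat, DWalk.support, p.support_concat]

end Aux

/-- If every vertex of a finite vertex-colored digraph `D` has an
in-neighbor and an out-neighbor of a different color, then `D` is vertex-1-color-avoiding
strongly 1-connected if and only if it is internally vertex-1-color-avoiding strongly
1-connected. -/
theorem stmt6 [Fintype V] [Fintype C] (A : V → V → Prop) (f : V → C)
    (h : ∀ v : V, (∃ u : V, A u v ∧ f u ≠ f v) ∧ (∃ w : V, A v w ∧ f w ≠ f v)) :
    VertexCAStronglyConnected A f ↔ InternallyVertexCAStronglyConnected A f := by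
  constructor
  · intro hV c u v
    -- helper: connect two vertices of color ≠ c by a color-c-avoiding path
    have connect : ∀ a b : V, f a ≠ c → f b ≠ c →
        ∃ q : DWalk A a b, q.support.Nodup ∧ ∀ x ∈ q.support, f x ≠ c := by
      intro a b ha hb
      rcases hV c with hS | hW
      · have : (⟨a, ha⟩ : {v : V // f v ≠ c}) = ⟨b, hb⟩ := Subsingleton.elim _ _
        have hab : a = b := congrArg Subtype.val this
        subst hab
        exact ⟨.nil, List.nodup_singleton _, fun x hx => by
          simp [DWalk.support] at hx; subst hx; exact ha⟩
      · obtain ⟨p⟩ := hW ⟨a, ha⟩ ⟨b, hb⟩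
        obtain ⟨q, hq⟩ := p.exists_down
        obtain ⟨r, hrnd, hrsub⟩ := q.exists_path
        exact ⟨r, hrnd, fun x hx => hq x (hrsub x hx)⟩
    by_cases hu : f u = c <;> by_cases hv : f v = c
    · -- both endpoints of color c
      by_cases huv : u = v
      · subst huv
        exact ⟨.nil, List.nodup_singleton _, by intro x hx; simp [DWalk.support] at hx⟩
      · obtain ⟨w, hw1, hw2⟩ := (h u).2
        obtain ⟨z, hz1, hz2⟩ := (h v).1
        rw [hu] at hw2
        rw [hv] at hz2
        obtain ⟨q, hnd, hq⟩ := connect w z hw2 hz2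
        refine ⟨.cons hw1 (q.concat hz1), ?_, ?_⟩
        · show (u :: (q.concat hz1).support).Nodup
          rw [q.support_concat]
          refine List.nodup_cons.2 ⟨?_, ?_⟩
          · intro hmem
            rcases List.mem_append.1 hmem with h1 | h1
            · exact hq u h1 hu
            · simp at h1; exact huv h1
          · refine List.Nodup.append hnd (List.nodup_singleton _) ?_
            intro x hx1 hx2
            simp at hx2; subst hx2
            exact hq _ hx1 hv
        · intro x hx
          have : x ∈ q.support := by
            have h1 : (DWalk.cons hw1 (q.concat hz1)).support.tail
                = q.support ++ [v] := by
              show (q.concat hz1).support = _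
              exact q.support_concat hz1
            rw [h1, List.dropLast_concat] at hx
            exact hx
          exact hq x this
    · -- f u = c, f v ≠ c
      obtain ⟨w, hw1, hw2⟩ := (h u).2
      rw [hu] at hw2
      obtain ⟨q, hnd, hq⟩ := connect w v hw2 hv
      refine ⟨.cons hw1 q, ?_, ?_⟩
      · exact List.nodup_cons.2 ⟨fun hm => hq u hm hu, hnd⟩
      · intro x hx
        have : x ∈ q.support := (List.dropLast_sublist _).subset hx
        exact hq x this
    · -- f u ≠ c, f v = c
      obtain ⟨z, hz1, hz2⟩ := (h v).1
      rw [hv] at hz2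
      obtain ⟨q, hnd, hq⟩ := connect u z hu hz2
      refine ⟨q.concat hz1, ?_, ?_⟩
      · rw [q.support_concat]
        refine List.Nodup.append hnd (List.nodup_singleton _) ?_
        intro x hx1 hx2
        simp at hx2; subst hx2
        exact hq _ hx1 hv
      · intro x hx
        have h1 : (q.concat hz1).support = u :: (q.support.tail ++ [v]) := by
          rw [q.support_concat, q.support_eq_cons]; rfl
        rw [h1] at hx
        simp only [List.tail_cons, List.dropLast_concat] at hx
        exact hq x (List.tail_sublist _ |>.subset hx)
    · -- f u ≠ c, f v ≠ c
      obtain ⟨q, hnd, hq⟩ := connect u v hu hv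
      refine ⟨q, hnd, fun x hx => ?_⟩
      have : x ∈ q.support :=
        (List.tail_sublist _).subset ((List.dropLast_sublist _).subset hx)
      exact hq x this
  · intro hI c
    right
    rintro ⟨u, hu⟩ ⟨v, hv⟩
    obtain ⟨p, _, hint⟩ := hI c u v
    have hall : ∀ x ∈ p.support, f x ≠ c := by
      intro x hx
      rcases p.mem_support_cases hx with rfl | rfl | hx'
      · exact hu
      · exact hv
      · exact hint x hx'
    exact p.exists_lift hall hu hv

end Stmt6
end

section
/- Let D be a vertex-colored digraph with a distinguished vertex r such that every vertex v ≠ r has an in-neighbor whose color is different from that of v, and r is the unique vertex of its color. Then D is vertex-1-color-avoiding r-rooted 1-connected if and only if D is internally vertex-1-color-avoiding r-rooted 1-connected. -/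
namespace Stmt7

universe u

/-- A directed walk in the digraph given by the arc relation `A`. -/
inductive DWalk {V : Type u} (A : V → V → Prop) : V → V → Type u
  | nil {v : V} : DWalk A v v
  | cons {u v w : V} (h : A u v) (p : DWalk A v w) : DWalk A u w

/-- The list of vertices visited by a directed walk (in order). -/
def DWalk.support {V : Type u} {A : V → V → Prop} : {u v : V} → DWalk A u v → List V
  | u, _, .nil => [u]
  | u, _, .cons _ p => u :: p.support

variable {V : Type u} {C : Type*}

/-- `D` is internally vertex-1-color-avoiding `r`-rooted 1-connected: for every color `c`
and every vertex `v`, there is a directed path from `r` to `v` none of whose internal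
vertices has color `c`. -/
def InternallyVertexCARooted (A : V → V → Prop) (f : V → C) (r : V) : Prop :=
  ∀ (c : C) (v : V), ∃ p : DWalk A r v, p.support.Nodup ∧
    ∀ x ∈ p.support.tail.dropLast, f x ≠ c

/-- `D` is vertex-1-color-avoiding `r`-rooted 1-connected: for every color `c` and every
vertex `v`, if neither `v` nor `r` has color `c`, then there is a directed `r`-`v` path
avoiding internal vertices of color `c`; and if `v` or `r` has color `c`, then `v` is merely
reachable from `r` in `D`. -/
def VertexCARooted (A : V → V → Prop) (f : V → C) (r : V) : Prop :=
  ∀ (c : C) (v : V),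
    ((f v ≠ c ∧ f r ≠ c) → ∃ p : DWalk A r v, p.support.Nodup ∧
      ∀ x ∈ p.support.tail.dropLast, f x ≠ c) ∧
    ((f v = c ∨ f r = c) → Nonempty (DWalk A r v))

def DWalk.concat {A : V → V → Prop} : {u v w : V} → DWalk A u v → A v w → DWalk A u w
  | _, _, _, .nil, h => .cons h .nil
  | _, _, _, .cons h' p, h => .cons h' (p.concat h)

lemma DWalk.support_concat {A : V → V → Prop} {u v w : V} (p : DWalk A u v) (h : A v w) :
    (p.concat h).support = p.support ++ [w] := by
  induction p with
  | nil => simp [concat, support]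
  | cons h' p ih => simp [concat, support, ih]

lemma DWalk.support_head {A : V → V → Prop} {u v : V} (p : DWalk A u v) :
    ∃ t, p.support = u :: t := by
  cases p <;> exact ⟨_, rfl⟩

lemma DWalk.mem_support_cases {A : V → V → Prop} {u v : V} (p : DWalk A u v) :
    ∀ x ∈ p.support, x = u ∨ x = v ∨ x ∈ p.support.tail.dropLast := by
  induction p with
  | nil => intro x hx; simp [support] at hx; tauto
  | @cons u a v h q ih =>
    intro x hx
    simp only [support, List.mem_cons, List.tail_cons] at hx ⊢
    rcases hx with rfl | hx
    · tauto
    · cases q with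
      | nil =>
        simp [support] at hx; subst hx; tauto
      | cons h' q' =>
        rcases ih x hx with rfl | h1 | h1
        · right; right
          obtain ⟨t, ht⟩ := (DWalk.cons h' q').support_head
          rw [ht]
          rcases List.eq_nil_or_concat (t) with rfl | ⟨t', z, rfl⟩
          · -- support = [a]; but a cons walk has support length ≥ 2
            exfalso
            have : ((DWalk.cons h' q').support).length = 1 := by rw [ht]; rfl
            simp [support] at this
            have := (q').support_head
            obtain ⟨t2, ht2⟩ := this
            rw [ht2] at this
            simp at this
          · rw [show x :: t'.concat z = (x :: t') ++ [z] from by simp, List.dropLast_concat]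
            simp
        · tauto
        · right; right
          obtain ⟨t, ht⟩ := (DWalk.cons h' q').support_head
          rw [ht] at h1 ⊢
          simp only [List.tail_cons] at h1
          rcases List.eq_nil_or_concat t with rfl | ⟨t', z, rfl⟩
          · exact absurd h1 (by simp)
          · simp only [List.concat_eq_append, List.dropLast_concat] at h1
            rw [show a :: t'.concat z = (a :: t') ++ [z] from by simp, List.dropLast_concat]
            simp [h1]

/-- Let `D` be a finite vertex-colored digraph with a distinguished vertex
`r` such that every vertex `v ≠ r` has an in-neighbor of a color different from that of `v`,
and `r` is the unique vertex of its color. Then `D` is vertex-1-color-avoiding `r`-rooted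
1-connected if and only if it is internally vertex-1-color-avoiding `r`-rooted 1-connected. -/
theorem stmt7 [Fintype V] [Fintype C] (A : V → V → Prop) (f : V → C) (r : V)
    (h1 : ∀ v : V, v ≠ r → ∃ u : V, A u v ∧ f u ≠ f v)
    (h2 : ∀ v : V, f v = f r → v = r) :
    VertexCARooted A f r ↔ InternallyVertexCARooted A f r := by
  constructor
  · intro hV
    -- key: for every w ≠ r there is a nodup path from r to w whose internal vertices
    -- avoid the color f w
    have key : ∀ w : V, w ≠ r → ∃ p : DWalk A r w, p.support.Nodup ∧
        ∀ x ∈ p.support.tail.dropLast, f x ≠ f w := by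
      intro w hw
      have hrw : f w ≠ f r := fun h => hw (h2 w h)
      obtain ⟨u, hu, hufw⟩ := h1 w hw
      obtain ⟨p, hnd, hint⟩ := (hV (f w) u).1 ⟨hufw, fun h => hrw h.symm⟩
      have hall : ∀ x ∈ p.support, f x ≠ f w := by
        intro x hx
        rcases p.mem_support_cases x hx with rfl | rfl | hx'
        · exact fun h => hrw h.symm
        · exact hufw
        · exact hint x hx'
      have hwns : w ∉ p.support := fun hmem => hall w hmem rfl
      obtain ⟨t, ht⟩ := p.support_head
      refine ⟨p.concat hu, ?_, ?_⟩
      · rw [DWalk.support_concat]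
        simp only [List.nodup_append, List.nodup_cons, List.not_mem_nil,
          List.nodup_nil, List.disjoint_singleton]
        exact ⟨hnd, by simp, by intro a ha b hb hab; simp at hb; rw [hab, hb] at ha; exact hwns ha⟩
      · rw [DWalk.support_concat, ht]
        intro x hx
        simp only [List.cons_append, List.tail_cons, List.concat_eq_append,
          List.dropLast_concat] at hx
        exact hall x (by rw [ht]; exact List.mem_cons_of_mem _ hx)
    intro c v
    by_cases hvr : v = r
    · subst hvr
      exact ⟨.nil, by constructor <;> simp [DWalk.support]⟩
    · obtain ⟨p, hnd, hint⟩ := key v hvr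
      by_cases hfr : f r = c
      · refine ⟨p, hnd, ?_⟩
        intro x hx
        have hxt : x ∈ p.support.tail := List.dropLast_subset _ hx
        obtain ⟨t, ht⟩ := p.support_head
        have hxr : x ≠ r := by
          rw [ht] at hnd hxt
          intro h; subst h
          exact (List.nodup_cons.mp hnd).1 hxt
        intro hxc
        exact hxr (h2 x (by rw [hxc, hfr]))
      · by_cases hfv : f v = c
        · exact ⟨p, hnd, by rw [← hfv]; exact hint⟩
        · exact (hV c v).1 ⟨hfv, hfr⟩
  · intro hI c v
    exact ⟨fun _ => hI c v, fun _ => ⟨(hI c v).choose⟩⟩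

end Stmt7
end

section
/- Let k and ℓ be positive integers. A digraph D admits an arc-ℓ-color-avoiding strongly k-arc-connected coloring if and only if D is strongly (k+ℓ)-arc-connected. -/
namespace Stmt9

universe u

/-- A directed walk in the digraph given by the arc relation `A`. -/
inductive DWalk {V : Type u} (A : V → V → Prop) : V → V → Type u
  | nil {v : V} : DWalk A v v
  | cons {u v w : V} (h : A u v) (p : DWalk A v w) : DWalk A u w

/-- The list of vertices visited by a directed walk (in order). -/
def DWalk.support {V : Type u} {A : V → V → Prop} : {u v : V} → DWalk A u v → List V
  | u, _, .nil => [u]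
  | u, _, .cons _ p => u :: p.support

/-- The list of arcs traversed by a directed walk. -/
def DWalk.darcs {V : Type u} {A : V → V → Prop} {u v : V} (p : DWalk A u v) : List (V × V) :=
  p.support.zip p.support.tail

variable {V : Type u}

/-- There exist `k` pairwise arc-disjoint directed `u`-`v` paths. -/
def ArcDisjointPaths (A : V → V → Prop) (u v : V) (k : ℕ) : Prop :=
  ∃ p : Fin k → DWalk A u v,
    (∀ i, (p i).support.Nodup) ∧
    ∀ i j, i ≠ j → ∀ a, a ∈ (p i).darcs → a ∉ (p j).darcs

/-- A digraph is strongly `k`-arc-connected: it has at least two vertices and for any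
ordered pair of distinct vertices there are at least `k` pairwise arc-disjoint dipaths. -/
def StronglyArcConnected (A : V → V → Prop) (k : ℕ) : Prop :=
  (∃ u v : V, u ≠ v) ∧ ∀ u v : V, u ≠ v → ArcDisjointPaths A u v k


namespace DWalk

variable {A : V → V → Prop}

lemma support_eq_cons {u v : V} (p : DWalk A u v) : p.support = u :: p.support.tail := by
  cases p <;> rfl

@[simp] lemma support_nil {v : V} : (DWalk.nil : DWalk A v v).support = [v] := rfl

@[simp] lemma support_cons {u v w : V} (h : A u v) (p : DWalk A v w) :
    (DWalk.cons h p).support = u :: p.support := rfl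

@[simp] lemma darcs_nil {v : V} : (DWalk.nil : DWalk A v v).darcs = [] := rfl

@[simp] lemma darcs_cons {u v w : V} (h : A u v) (p : DWalk A v w) :
    (DWalk.cons h p).darcs = (u, v) :: p.darcs := by
  cases p <;> rfl

lemma start_mem_support {u v : V} (p : DWalk A u v) : u ∈ p.support := by
  rw [p.support_eq_cons]; exact List.mem_cons_self

lemma end_mem_support {u v : V} (p : DWalk A u v) : v ∈ p.support := by
  induction p with
  | nil => simp
  | cons h p ih => simp [ih]

lemma rel_of_mem_darcs {u v : V} {p : DWalk A u v} {a : V × V} (ha : a ∈ p.darcs) :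
    A a.1 a.2 := by
  induction p with
  | nil => simp at ha
  | cons h p ih =>
    rw [darcs_cons] at ha
    rcases List.mem_cons.1 ha with h' | h'
    · subst h'; exact h
    · exact ih h'

lemma fst_mem_support_of_mem_darcs {u v : V} {p : DWalk A u v} {a : V × V}
    (ha : a ∈ p.darcs) : a.1 ∈ p.support :=
  (List.of_mem_zip ha).1

lemma snd_mem_tail_of_mem_darcs {u v : V} {p : DWalk A u v} {a : V × V}
    (ha : a ∈ p.darcs) : a.2 ∈ p.support.tail :=
  (List.of_mem_zip ha).2

lemma exists_darc_tail {u v w : V} (p : DWalk A u v) (hw : w ∈ p.support) (hne : w ≠ v) :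
    ∃ y, (w, y) ∈ p.darcs := by
  induction p with
  | nil =>
    simp only [support_nil, List.mem_singleton] at hw
    exact absurd hw hne
  | cons h p ih =>
    rename_i u' m w'
    rw [support_cons, List.mem_cons] at hw
    rcases hw with rfl | hw
    · exact ⟨m, by simp⟩
    · obtain ⟨y, hy⟩ := ih hw hne
      exact ⟨y, by simp [hy]⟩

lemma exists_darc_head {u v w : V} (p : DWalk A u v) (hw : w ∈ p.support) (hne : w ≠ u) :
    ∃ x, (x, w) ∈ p.darcs := by
  induction p with
  | nil =>
    simp only [support_nil, List.mem_singleton] at hw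
    exact absurd hw hne
  | cons h p ih =>
    rename_i u' m _
    rw [support_cons, List.mem_cons] at hw
    rcases hw with rfl | hw
    · exact absurd rfl hne
    · by_cases hwm : w = m
      · subst hwm; exact ⟨u', by simp⟩
      · obtain ⟨x, hx⟩ := ih hw hwm
        exact ⟨x, by simp [hx]⟩

lemma not_darc_head_start {u v : V} {p : DWalk A u v} (hnd : p.support.Nodup) (x : V) :
    (x, u) ∉ p.darcs := by
  intro h
  have h2 := snd_mem_tail_of_mem_darcs h
  rw [p.support_eq_cons] at hnd
  exact (List.nodup_cons.1 hnd).1 h2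

lemma not_darc_tail_end {u v : V} {p : DWalk A u v} (hnd : p.support.Nodup) (y : V) :
    (v, y) ∉ p.darcs := by
  induction p with
  | nil => simp
  | cons h p ih =>
    rename_i u' m w
    rw [darcs_cons]
    simp only [support_cons, List.nodup_cons] at hnd
    intro hmem
    rcases List.mem_cons.1 hmem with h' | h'
    · injection h' with hvw _
      exact hnd.1 (hvw ▸ p.end_mem_support)
    · exact ih hnd.2 h'

lemma darc_tail_unique {u v : V} {p : DWalk A u v} (hnd : p.support.Nodup) {w y₁ y₂ : V}
    (h1 : (w, y₁) ∈ p.darcs) (h2 : (w, y₂) ∈ p.darcs) : y₁ = y₂ := by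
  induction p with
  | nil => simp at h1
  | cons h p ih =>
    rename_i u' m w'
    simp only [support_cons, List.nodup_cons] at hnd
    rw [darcs_cons, List.mem_cons] at h1 h2
    rcases h1 with h1 | h1 <;> rcases h2 with h2 | h2
    · injection h1 with e1 e2; injection h2 with e3 e4; rw [e2, e4]
    · injection h1 with e1 e2; subst e1
      exact absurd (fst_mem_support_of_mem_darcs h2) hnd.1
    · injection h2 with e1 e2; subst e1
      exact absurd (fst_mem_support_of_mem_darcs h1) hnd.1
    · exact ih hnd.2 h1 h2

lemma darc_head_unique {u v : V} {p : DWalk A u v} (hnd : p.support.Nodup) {w x₁ x₂ : V}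
    (h1 : (x₁, w) ∈ p.darcs) (h2 : (x₂, w) ∈ p.darcs) : x₁ = x₂ := by
  induction p with
  | nil => simp at h1
  | cons h p ih =>
    rename_i u' m w'
    simp only [support_cons, List.nodup_cons] at hnd
    rw [darcs_cons, List.mem_cons] at h1 h2
    rcases h1 with h1 | h1 <;> rcases h2 with h2 | h2
    · injection h1 with e1 e2; injection h2 with e3 e4; rw [e1, e3]
    · injection h1 with e1 e2; subst e2
      have h5 := snd_mem_tail_of_mem_darcs h2
      rw [p.support_eq_cons, List.nodup_cons] at hnd
      exact absurd h5 hnd.2.1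
    · injection h2 with e1 e2; subst e2
      have h5 := snd_mem_tail_of_mem_darcs h1
      rw [p.support_eq_cons, List.nodup_cons] at hnd
      exact absurd h5 hnd.2.1
    · exact ih hnd.2 h1 h2

/-- Transfer a walk to another arc relation that holds on all its darcs. -/
lemma transfer {B : V → V → Prop} {u v : V} (p : DWalk A u v)
    (hB : ∀ a ∈ p.darcs, B a.1 a.2) : ∃ q : DWalk B u v, q.support = p.support := by
  induction p with
  | nil => exact ⟨.nil, rfl⟩
  | cons h p ih =>
    obtain ⟨q, hq⟩ := ih (fun a ha => hB a (by simp [ha]))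
    exact ⟨.cons (hB (_, _) (by simp)) q, by simp [hq]⟩

lemma darcs_eq_of_support_eq {B : V → V → Prop} {u v u' v' : V} {p : DWalk A u v}
    {q : DWalk B u' v'} (h : q.support = p.support) : q.darcs = p.darcs := by
  unfold DWalk.darcs; rw [h]

/-- Extract a walk starting at a vertex on the walk (a suffix). -/
lemma extract {u v w : V} (p : DWalk A u v) (hw : w ∈ p.support) :
    ∃ q : DWalk A w v, q.support <:+ p.support := by
  induction p with
  | nil =>
    simp only [support_nil, List.mem_singleton] at hw
    subst hw; exact ⟨.nil, List.suffix_refl _⟩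
  | cons h p ih =>
    rename_i u' m w'
    rw [support_cons, List.mem_cons] at hw
    rcases hw with rfl | hw
    · exact ⟨.cons h p, List.suffix_refl _⟩
    · obtain ⟨q, hq⟩ := ih hw
      exact ⟨q, hq.trans (List.suffix_cons _ _)⟩

/-- From any walk one gets a walk with no repeated vertices whose support is contained
in the original one. -/
lemma toPath {u v : V} (p : DWalk A u v) :
    ∃ q : DWalk A u v, q.support.Nodup ∧ ∀ x ∈ q.support, x ∈ p.support := by
  induction p with
  | nil => exact ⟨.nil, by simp, by simp⟩
  | cons h p ih =>
    rename_i u' m w'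
    obtain ⟨q, hnd, hsub⟩ := ih
    by_cases hu : u' ∈ q.support
    · obtain ⟨r, hr⟩ := q.extract hu
      refine ⟨r, hnd.sublist hr.sublist, fun x hx => ?_⟩
      exact List.mem_cons_of_mem _ (hsub x (hr.sublist.mem hx))
    · refine ⟨.cons h q, by simp [hnd, hu], fun x hx => ?_⟩
      rw [support_cons, List.mem_cons] at hx ⊢
      rcases hx with rfl | hx
      · exact Or.inl rfl
      · exact Or.inr (hsub x hx)

/-- A reflexive-transitive chain gives a simple directed path. -/
lemma of_reflTransGen {u v : V} (h : Relation.ReflTransGen A u v) :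
    ∃ p : DWalk A u v, p.support.Nodup := by
  have : Nonempty (DWalk A u v) := by
    induction h with
    | refl => exact ⟨.nil⟩
    | tail hr ha ih =>
      obtain ⟨p⟩ := ih
      -- append single arc at the end
      clear hr
      rename_i b c
      refine ⟨?_⟩
      induction p with
      | nil => exact .cons ha .nil
      | cons h' p' ih' => exact .cons h' (ih' ha)
  obtain ⟨p⟩ := this
  obtain ⟨q, hnd, -⟩ := p.toPath
  exact ⟨q, hnd⟩

/-- A walk from inside `S` to outside `S` crosses the boundary. -/
lemma exists_crossing {u v : V} (p : DWalk A u v) {S : Set V} (hu : u ∈ S) (hv : v ∉ S) :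
    ∃ a ∈ p.darcs, a.1 ∈ S ∧ a.2 ∉ S := by
  induction p with
  | nil => exact absurd hu hv
  | cons h p ih =>
    rename_i u' m w'
    by_cases hm : m ∈ S
    · obtain ⟨a, ha, h1, h2⟩ := ih hm hv
      exact ⟨a, by simp [ha], h1, h2⟩
    · exact ⟨(u', m), by simp, hu, hm⟩

end DWalk

section Flow

open Classical

variable [Fintype V]

/-- Number of elements satisfying `P` (classical). -/
noncomputable def pcard (P : V → Prop) : ℕ :=
  (Finset.univ.filter (fun b => P b)).card

lemma pcard_eq (P : V → Prop) [DecidablePred P] :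
    pcard P = (Finset.univ.filter (fun b => P b)).card := by
  simp only [pcard]
  exact congrArg Finset.card (Finset.filter_congr_decidable _ _ _)

/-- Out-degree of `w` in the arc set `g`. -/
noncomputable def outdeg (g : V → V → Prop) (w : V) : ℕ :=
  pcard (fun b => g w b)

/-- In-degree of `w` in the arc set `g`. -/
noncomputable def indeg (g : V → V → Prop) (w : V) : ℕ :=
  pcard (fun b => g b w)

/-- `g` is a system of arcs of `A` carrying `n` units of flow from `u` to `v`. -/
def IsFlow (A g : V → V → Prop) (u v : V) (n : ℕ) : Prop :=
  (∀ x y, g x y → A x y) ∧ outdeg g u = indeg g u + n ∧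
    ∀ w, w ≠ u → w ≠ v → outdeg g w = indeg g w

/-- `F` is a set of arcs meeting every directed walk from `u` to `v`. -/
def IsCut (A : V → V → Prop) (u v : V) (F : Finset (V × V)) : Prop :=
  ∀ p : DWalk A u v, ∃ a ∈ p.darcs, a ∈ F

lemma sum_outdeg (g : V → V → Prop) (S : Finset V) :
    ∑ w ∈ S, outdeg g w = ((S ×ˢ Finset.univ).filter (fun a => g a.1 a.2)).card := by
  rw [Finset.card_eq_sum_card_fiberwise (f := Prod.fst) (t := S)
    (fun a ha => (Finset.mem_product.1 (Finset.mem_filter.1 ha).1).1)]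
  refine Finset.sum_congr rfl fun w hw => ?_
  unfold outdeg pcard
  refine Finset.card_bij' (fun b _ => (w, b)) (fun a _ => a.2) ?_ ?_ ?_ ?_
  · intro b hb
    simp only [Finset.mem_filter, Finset.mem_univ, true_and] at hb
    simp [Finset.mem_filter, Finset.mem_product, hb, hw]
  · intro a ha
    simp only [Finset.mem_filter, Finset.mem_product] at ha
    simp only [Finset.mem_filter, Finset.mem_univ, true_and]
    rw [← ha.2]; exact ha.1.2
  · intro b hb; rfl
  · intro a ha
    simp only [Finset.mem_filter] at ha
    obtain ⟨-, h3⟩ := ha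
    subst h3
    rfl

lemma sum_indeg (g : V → V → Prop) (S : Finset V) :
    ∑ w ∈ S, indeg g w = ((Finset.univ ×ˢ S).filter (fun a => g a.1 a.2)).card := by
  rw [Finset.card_eq_sum_card_fiberwise (f := Prod.snd) (t := S)
    (fun a ha => (Finset.mem_product.1 (Finset.mem_filter.1 ha).1).2)]
  refine Finset.sum_congr rfl fun w hw => ?_
  unfold indeg pcard
  refine Finset.card_bij' (fun b _ => (b, w)) (fun a _ => a.1) ?_ ?_ ?_ ?_
  · intro b hb
    simp only [Finset.mem_filter, Finset.mem_univ, true_and] at hb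
    simp [Finset.mem_filter, Finset.mem_product, hb, hw]
  · intro a ha
    simp only [Finset.mem_filter, Finset.mem_product] at ha
    simp only [Finset.mem_filter, Finset.mem_univ, true_and]
    rw [← ha.2]; exact ha.1.2
  · intro b hb; rfl
  · intro a ha
    simp only [Finset.mem_filter] at ha
    obtain ⟨-, h3⟩ := ha
    subst h3
    rfl

lemma prod_filter_split (g : V → V → Prop) (S : Finset V) :
    ((S ×ˢ Finset.univ).filter (fun a => g a.1 a.2)).card
      = ((S ×ˢ S).filter (fun a => g a.1 a.2)).card
        + ((S ×ˢ (Finset.univ \ S)).filter (fun a => g a.1 a.2)).card := by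
  have h1 : ((S ×ˢ Finset.univ).filter (fun a => g a.1 a.2)).filter (fun a => a.2 ∈ S)
      = (S ×ˢ S).filter (fun a => g a.1 a.2) := by
    ext a
    simp only [Finset.mem_filter, Finset.mem_product, Finset.mem_univ]
    tauto
  have h2 : ((S ×ˢ Finset.univ).filter (fun a => g a.1 a.2)).filter (fun a => ¬ a.2 ∈ S)
      = (S ×ˢ (Finset.univ \ S)).filter (fun a => g a.1 a.2) := by
    ext a
    simp only [Finset.mem_filter, Finset.mem_product, Finset.mem_univ, Finset.mem_sdiff]
    tauto
  rw [← h1, ← h2, Finset.card_filter_add_card_filter_not]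


lemma flow_sum {A g : V → V → Prop} {u v : V} {n : ℕ} (hf : IsFlow A g u v n)
    {S : Finset V} (hu : u ∈ S) (hv : v ∉ S) :
    ∑ w ∈ S, outdeg g w = (∑ w ∈ S, indeg g w) + n := by
  rw [← Finset.add_sum_erase S _ hu, ← Finset.add_sum_erase S (indeg g) hu, hf.2.1]
  have : ∑ w ∈ S.erase u, outdeg g w = ∑ w ∈ S.erase u, indeg g w :=
    Finset.sum_congr rfl fun w hw => hf.2.2 w (Finset.ne_of_mem_erase hw)
      (fun h => hv (h ▸ (Finset.mem_of_mem_erase hw)))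
  omega

lemma flow_cross {A g : V → V → Prop} {u v : V} {n : ℕ} (hf : IsFlow A g u v n)
    (S : Finset V) (hu : u ∈ S) (hv : v ∉ S)
    (hin : ∀ x y, g x y → y ∈ S → x ∈ S) :
    ((S ×ˢ (Finset.univ \ S)).filter (fun a => g a.1 a.2)).card = n := by
  have hsum := flow_sum hf hu hv
  have hineq : ((Finset.univ ×ˢ S).filter (fun a => g a.1 a.2))
      = ((S ×ˢ S).filter (fun a => g a.1 a.2)) := by
    ext a
    simp only [Finset.mem_filter, Finset.mem_product, Finset.mem_univ, true_and]
    constructor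
    · rintro ⟨h1, h2⟩; exact ⟨⟨hin _ _ h2 h1, h1⟩, h2⟩
    · rintro ⟨⟨h1, h2⟩, h3⟩; exact ⟨h2, h3⟩
  rw [sum_outdeg, sum_indeg, prod_filter_split, hineq] at hsum
  omega

lemma card_or_aux {X Y Z W : Finset V} (hX : ∀ b, b ∈ X ↔ (b ∈ Y ∨ (b ∈ Z ∧ b ∉ W)))
    (hYZ : ∀ b, b ∈ Y → b ∉ Z) (hWZ : W ⊆ Z) : X.card + W.card = Y.card + Z.card := by
  have hunion : X = Y ∪ (Z \ W) := by
    ext b; rw [hX]; simp only [Finset.mem_union, Finset.mem_sdiff]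
  have hdisj : Disjoint Y (Z \ W) := by
    rw [Finset.disjoint_left]; intro b hb hb2
    exact hYZ b hb (Finset.mem_sdiff.1 hb2).1
  rw [hunion, Finset.card_union_of_disjoint hdisj, add_assoc,
    Finset.card_sdiff_add_card_eq_card hWZ]

lemma card_filter_or_sub {P Q R : V → Prop} (hPQ : ∀ b, P b → ¬ Q b)
    (hRQ : ∀ b, R b → Q b) :
    pcard (fun b => P b ∨ (Q b ∧ ¬ R b)) + pcard (fun b => R b)
      = pcard (fun b => P b) + pcard (fun b => Q b) := by
  simp only [pcard]
  refine card_or_aux (fun b => ?_) (fun b hb => ?_) ?_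
  · simp only [Finset.mem_filter, Finset.mem_univ, true_and]
  · simp only [Finset.mem_filter, Finset.mem_univ, true_and] at hb ⊢
    exact hPQ b hb
  · intro b hb
    simp only [Finset.mem_filter, Finset.mem_univ, true_and] at hb ⊢
    exact hRQ b hb

lemma pcard_darc_tail_pos {B : V → V → Prop} {u v : V} {q : DWalk B u v}
    (hnd : q.support.Nodup) {w s : V} (h : (w, s) ∈ q.darcs) (P : V → Prop) (hP : P s) :
    pcard (fun b => (w, b) ∈ q.darcs ∧ P b) = 1 := by
  simp only [pcard]
  rw [Finset.card_eq_one]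
  refine ⟨s, ?_⟩
  ext b
  simp only [Finset.mem_filter, Finset.mem_univ, true_and, Finset.mem_singleton]
  constructor
  · rintro ⟨h1, _⟩; exact DWalk.darc_tail_unique hnd h1 h
  · rintro rfl; exact ⟨h, hP⟩

lemma pcard_darc_tail_neg {B : V → V → Prop} {u v : V} {q : DWalk B u v}
    (hnd : q.support.Nodup) {w s : V} (h : (w, s) ∈ q.darcs) (P : V → Prop) (hP : ¬ P s) :
    pcard (fun b => (w, b) ∈ q.darcs ∧ P b) = 0 := by
  simp only [pcard]
  rw [Finset.card_eq_zero]
  ext b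
  simp only [Finset.mem_filter, Finset.mem_univ, true_and, Finset.notMem_empty, iff_false]
  rintro ⟨h1, h2⟩
  exact hP ((DWalk.darc_tail_unique hnd h1 h) ▸ h2)

lemma pcard_darc_head_pos {B : V → V → Prop} {u v : V} {q : DWalk B u v}
    (hnd : q.support.Nodup) {w t : V} (h : (t, w) ∈ q.darcs) (P : V → Prop) (hP : P t) :
    pcard (fun b => (b, w) ∈ q.darcs ∧ P b) = 1 := by
  simp only [pcard]
  rw [Finset.card_eq_one]
  refine ⟨t, ?_⟩
  ext b
  simp only [Finset.mem_filter, Finset.mem_univ, true_and, Finset.mem_singleton]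
  constructor
  · rintro ⟨h1, _⟩; exact DWalk.darc_head_unique hnd h1 h
  · rintro rfl; exact ⟨h, hP⟩

lemma pcard_darc_head_neg {B : V → V → Prop} {u v : V} {q : DWalk B u v}
    (hnd : q.support.Nodup) {w t : V} (h : (t, w) ∈ q.darcs) (P : V → Prop) (hP : ¬ P t) :
    pcard (fun b => (b, w) ∈ q.darcs ∧ P b) = 0 := by
  simp only [pcard]
  rw [Finset.card_eq_zero]
  ext b
  simp only [Finset.mem_filter, Finset.mem_univ, true_and, Finset.notMem_empty, iff_false]
  rintro ⟨h1, h2⟩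
  exact hP ((DWalk.darc_head_unique hnd h1 h) ▸ h2)

lemma pcard_darc_tail_zero {B : V → V → Prop} {u v : V} {q : DWalk B u v}
    {w : V} (h : ∀ y, (w, y) ∉ q.darcs) (P : V → Prop) :
    pcard (fun b => (w, b) ∈ q.darcs ∧ P b) = 0 := by
  simp only [pcard]
  rw [Finset.card_eq_zero]
  ext b
  simp only [Finset.mem_filter, Finset.mem_univ, true_and, Finset.notMem_empty, iff_false]
  rintro ⟨h1, _⟩
  exact h b h1

lemma pcard_darc_head_zero {B : V → V → Prop} {u v : V} {q : DWalk B u v}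
    {w : V} (h : ∀ x, (x, w) ∉ q.darcs) (P : V → Prop) :
    pcard (fun b => (b, w) ∈ q.darcs ∧ P b) = 0 := by
  simp only [pcard]
  rw [Finset.card_eq_zero]
  ext b
  simp only [Finset.mem_filter, Finset.mem_univ, true_and, Finset.notMem_empty, iff_false]
  rintro ⟨h1, _⟩
  exact h b h1

lemma augment {A g : V → V → Prop} {u v : V} {n : ℕ} (hf : IsFlow A g u v n) (hne : u ≠ v)
    (q : DWalk (fun x y => (A x y ∧ ¬ g x y) ∨ g y x) u v) (hnd : q.support.Nodup) :
    ∃ g' : V → V → Prop, IsFlow A g' u v (n + 1) := by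
  set Add : V → V → Prop := fun x y => (x, y) ∈ q.darcs ∧ ¬ g y x with hAddDef
  set Rem : V → V → Prop := fun x y => (y, x) ∈ q.darcs ∧ g x y with hRemDef
  have hAddNg : ∀ x y, Add x y → ¬ g x y := by
    rintro x y ⟨hd, hng⟩
    exact ((DWalk.rel_of_mem_darcs hd).resolve_right hng).2
  have degOut : ∀ w, outdeg (fun x y => Add x y ∨ (g x y ∧ ¬ Rem x y)) w
        + pcard (fun b => Rem w b)
      = pcard (fun b => Add w b) + outdeg g w :=
    fun w => card_filter_or_sub (P := fun b => Add w b) (Q := fun b => g w b)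
      (R := fun b => Rem w b) (fun b hb => hAddNg w b hb) (fun b hb => hb.2)
  have degIn : ∀ w, indeg (fun x y => Add x y ∨ (g x y ∧ ¬ Rem x y)) w
        + pcard (fun b => Rem b w)
      = pcard (fun b => Add b w) + indeg g w :=
    fun w => card_filter_or_sub (P := fun b => Add b w) (Q := fun b => g b w)
      (R := fun b => Rem b w) (fun b hb => hAddNg b w hb) (fun b hb => hb.2)
  refine ⟨fun x y => Add x y ∨ (g x y ∧ ¬ Rem x y), ?_, ?_, ?_⟩
  · rintro x y (⟨hd, hng⟩ | ⟨hg, -⟩)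
    · exact ((DWalk.rel_of_mem_darcs hd).resolve_right hng).1
    · exact hf.1 x y hg
  · obtain ⟨s, hs⟩ := q.exists_darc_tail q.start_mem_support hne
    have hnohead : ∀ x, (x, u) ∉ q.darcs := DWalk.not_darc_head_start hnd
    have e1 := degOut u
    have e2 := degIn u
    have c1 : pcard (fun b => Rem u b) = 0 := by
      rw [hRemDef]; exact pcard_darc_head_zero hnohead _
    have c4 : pcard (fun b => Add b u) = 0 := by
      rw [hAddDef]; exact pcard_darc_head_zero hnohead _
    have hval := hf.2.1
    by_cases hgsu : g s u
    · have c2 : pcard (fun b => Add u b) = 0 := by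
        rw [hAddDef]; exact pcard_darc_tail_neg hnd hs _ (by simpa using hgsu)
      have c3 : pcard (fun b => Rem b u) = 1 := by
        rw [hRemDef]; exact pcard_darc_tail_pos hnd hs _ hgsu
      omega
    · have c2 : pcard (fun b => Add u b) = 1 := by
        rw [hAddDef]; exact pcard_darc_tail_pos hnd hs _ hgsu
      have c3 : pcard (fun b => Rem b u) = 0 := by
        rw [hRemDef]; exact pcard_darc_tail_neg hnd hs _ hgsu
      omega
  · intro w hwu hwv
    have e1 := degOut w
    have e2 := degIn w
    by_cases hwsup : w ∈ q.support
    · obtain ⟨s, hs⟩ := q.exists_darc_tail hwsup hwv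
      obtain ⟨t, ht⟩ := q.exists_darc_head hwsup hwu
      have hval := hf.2.2 w hwu hwv
      by_cases h1 : g s w <;> by_cases h2 : g w t
      · have c1 : pcard (fun b => Rem w b) = 1 := by
          rw [hRemDef]; exact pcard_darc_head_pos hnd ht _ h2
        have c2 : pcard (fun b => Add w b) = 0 := by
          rw [hAddDef]; exact pcard_darc_tail_neg hnd hs _ (by simpa using h1)
        have c3 : pcard (fun b => Rem b w) = 1 := by
          rw [hRemDef]; exact pcard_darc_tail_pos hnd hs _ h1
        have c4 : pcard (fun b => Add b w) = 0 := by
          rw [hAddDef]; exact pcard_darc_head_neg hnd ht _ (by simpa using h2)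
        omega
      · have c1 : pcard (fun b => Rem w b) = 0 := by
          rw [hRemDef]; exact pcard_darc_head_neg hnd ht _ h2
        have c2 : pcard (fun b => Add w b) = 0 := by
          rw [hAddDef]; exact pcard_darc_tail_neg hnd hs _ (by simpa using h1)
        have c3 : pcard (fun b => Rem b w) = 1 := by
          rw [hRemDef]; exact pcard_darc_tail_pos hnd hs _ h1
        have c4 : pcard (fun b => Add b w) = 1 := by
          rw [hAddDef]; exact pcard_darc_head_pos hnd ht _ h2
        omega
      · have c1 : pcard (fun b => Rem w b) = 1 := by
          rw [hRemDef]; exact pcard_darc_head_pos hnd ht _ h2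
        have c2 : pcard (fun b => Add w b) = 1 := by
          rw [hAddDef]; exact pcard_darc_tail_pos hnd hs _ h1
        have c3 : pcard (fun b => Rem b w) = 0 := by
          rw [hRemDef]; exact pcard_darc_tail_neg hnd hs _ h1
        have c4 : pcard (fun b => Add b w) = 0 := by
          rw [hAddDef]; exact pcard_darc_head_neg hnd ht _ (by simpa using h2)
        omega
      · have c1 : pcard (fun b => Rem w b) = 0 := by
          rw [hRemDef]; exact pcard_darc_head_neg hnd ht _ h2
        have c2 : pcard (fun b => Add w b) = 1 := by
          rw [hAddDef]; exact pcard_darc_tail_pos hnd hs _ h1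
        have c3 : pcard (fun b => Rem b w) = 0 := by
          rw [hRemDef]; exact pcard_darc_tail_neg hnd hs _ h1
        have c4 : pcard (fun b => Add b w) = 1 := by
          rw [hAddDef]; exact pcard_darc_head_pos hnd ht _ h2
        omega
    · have hnotail : ∀ y, (w, y) ∉ q.darcs := fun y hy =>
        hwsup (DWalk.fst_mem_support_of_mem_darcs hy)
      have hnohead : ∀ x, (x, w) ∉ q.darcs := fun x hx =>
        hwsup (List.mem_of_mem_tail (DWalk.snd_mem_tail_of_mem_darcs hx))
      have c1 : pcard (fun b => Rem w b) = 0 := by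
        rw [hRemDef]; exact pcard_darc_head_zero hnohead _
      have c2 : pcard (fun b => Add w b) = 0 := by
        rw [hAddDef]; exact pcard_darc_tail_zero hnotail _
      have c3 : pcard (fun b => Rem b w) = 0 := by
        rw [hRemDef]; exact pcard_darc_tail_zero hnotail _
      have c4 : pcard (fun b => Add b w) = 0 := by
        rw [hAddDef]; exact pcard_darc_head_zero hnohead _
      have hval := hf.2.2 w hwu hwv
      omega

lemma exists_flow {A : V → V → Prop} {u v : V} (hne : u ≠ v) :
    ∀ n : ℕ, (∀ F : Finset (V × V), IsCut A u v F → n ≤ F.card) →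
      ∃ g : V → V → Prop, IsFlow A g u v n := by
  intro n
  induction n with
  | zero =>
    intro _
    refine ⟨fun _ _ => False, fun x y h => h.elim, ?_, ?_⟩
    · simp [outdeg, indeg, pcard]
    · intro w _ _; simp [outdeg, indeg, pcard]
  | succ n ih =>
    intro hcut
    obtain ⟨g, hg⟩ := ih (fun F hF => le_trans (Nat.le_succ n) (hcut F hF))
    by_cases hreach : Relation.ReflTransGen (fun x y => (A x y ∧ ¬ g x y) ∨ g y x) u v
    · obtain ⟨q, hnd⟩ := DWalk.of_reflTransGen hreach
      exact augment hg hne q hnd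
    · exfalso
      set R : V → V → Prop := fun x y => (A x y ∧ ¬ g x y) ∨ g y x with hR
      set S : Finset V := Finset.univ.filter (fun w => Relation.ReflTransGen R u w) with hS
      have hmemS : ∀ w, w ∈ S ↔ Relation.ReflTransGen R u w := by
        intro w; rw [hS]; simp [Finset.mem_filter]
      have huS : u ∈ S := (hmemS u).2 .refl
      have hvS : v ∉ S := fun h => hreach ((hmemS v).1 h)
      have hclosed : ∀ x y, x ∈ S → R x y → y ∈ S := fun x y hx hr =>
        (hmemS y).2 (Relation.ReflTransGen.tail ((hmemS x).1 hx) hr)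
      have hforward : ∀ x y, x ∈ S → y ∉ S → A x y → g x y := by
        intro x y hx hy ha
        by_contra hgxy
        exact hy (hclosed x y hx (Or.inl ⟨ha, hgxy⟩))
      have hin : ∀ x y, g x y → y ∈ S → x ∈ S := by
        intro x y hgxy hy
        exact hclosed y x hy (Or.inr hgxy)
      have hcross := flow_cross hg S huS hvS hin
      have hFcut : IsCut A u v ((S ×ˢ (Finset.univ \ S)).filter (fun a => A a.1 a.2)) := by
        intro p
        obtain ⟨a, ha, h1, h2⟩ := p.exists_crossing (S := {w | w ∈ S}) huS hvS
        refine ⟨a, ha, ?_⟩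
        simp only [Finset.mem_filter, Finset.mem_product, Finset.mem_sdiff, Finset.mem_univ,
          true_and]
        exact ⟨⟨h1, h2⟩, DWalk.rel_of_mem_darcs ha⟩
      have hle := hcut _ hFcut
      have heq : ((S ×ˢ (Finset.univ \ S)).filter (fun a => A a.1 a.2))
          = ((S ×ˢ (Finset.univ \ S)).filter (fun a => g a.1 a.2)) := by
        ext a
        simp only [Finset.mem_filter, Finset.mem_product, Finset.mem_sdiff, Finset.mem_univ,
          true_and]
        constructor
        · rintro ⟨⟨h1, h2⟩, h3⟩; exact ⟨⟨h1, h2⟩, hforward _ _ h1 h2 h3⟩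
        · rintro ⟨⟨h1, h2⟩, h3⟩; exact ⟨⟨h1, h2⟩, hg.1 _ _ h3⟩
      rw [heq, hcross] at hle
      omega

omit [Fintype V] in
lemma card_diff_aux {X Z W : Finset V} (hX : ∀ b, b ∈ X ↔ (b ∈ Z ∧ b ∉ W)) (hWZ : W ⊆ Z) :
    X.card + W.card = Z.card := by
  have hXe : X = Z \ W := by
    ext b; rw [hX]; simp [Finset.mem_sdiff]
  rw [hXe, Finset.card_sdiff_add_card_eq_card hWZ]

lemma pcard_split (Q R : V → Prop) (hRQ : ∀ b, R b → Q b) :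
    pcard (fun b => Q b ∧ ¬ R b) + pcard (fun b => R b) = pcard (fun b => Q b) := by
  simp only [pcard]
  refine card_diff_aux (fun b => ?_) ?_
  · simp only [Finset.mem_filter, Finset.mem_univ, true_and]
  · intro b hb
    simp only [Finset.mem_filter, Finset.mem_univ, true_and] at hb ⊢
    exact hRQ b hb

lemma pcard_darc_tail_one {B : V → V → Prop} {u v : V} {q : DWalk B u v}
    (hnd : q.support.Nodup) {w s : V} (h : (w, s) ∈ q.darcs) :
    pcard (fun b => (w, b) ∈ q.darcs) = 1 := by
  simp only [pcard]
  rw [Finset.card_eq_one]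
  refine ⟨s, ?_⟩
  ext b
  simp only [Finset.mem_filter, Finset.mem_univ, true_and, Finset.mem_singleton]
  exact ⟨fun h1 => DWalk.darc_tail_unique hnd h1 h, fun h1 => h1 ▸ h⟩

lemma pcard_darc_head_one {B : V → V → Prop} {u v : V} {q : DWalk B u v}
    (hnd : q.support.Nodup) {w t : V} (h : (t, w) ∈ q.darcs) :
    pcard (fun b => (b, w) ∈ q.darcs) = 1 := by
  simp only [pcard]
  rw [Finset.card_eq_one]
  refine ⟨t, ?_⟩
  ext b
  simp only [Finset.mem_filter, Finset.mem_univ, true_and, Finset.mem_singleton]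
  exact ⟨fun h1 => DWalk.darc_head_unique hnd h1 h, fun h1 => h1 ▸ h⟩

lemma pcard_darc_tail_none {B : V → V → Prop} {u v : V} {q : DWalk B u v}
    {w : V} (h : ∀ y, (w, y) ∉ q.darcs) :
    pcard (fun b => (w, b) ∈ q.darcs) = 0 := by
  simp only [pcard]
  rw [Finset.card_eq_zero]
  ext b
  simp only [Finset.mem_filter, Finset.mem_univ, true_and, Finset.notMem_empty, iff_false]
  exact h b

lemma pcard_darc_head_none {B : V → V → Prop} {u v : V} {q : DWalk B u v}
    {w : V} (h : ∀ x, (x, w) ∉ q.darcs) :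
    pcard (fun b => (b, w) ∈ q.darcs) = 0 := by
  simp only [pcard]
  rw [Finset.card_eq_zero]
  ext b
  simp only [Finset.mem_filter, Finset.mem_univ, true_and, Finset.notMem_empty, iff_false]
  exact h b

lemma exists_gpath {A g : V → V → Prop} {u v : V} {n : ℕ} (hf : IsFlow A g u v (n + 1))
    (hne : u ≠ v) : ∃ q : DWalk g u v, q.support.Nodup := by
  by_cases hreach : Relation.ReflTransGen g u v
  · exact DWalk.of_reflTransGen hreach
  · exfalso
    set S : Finset V := Finset.univ.filter (fun w => Relation.ReflTransGen g u w) with hS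
    have hmemS : ∀ w, w ∈ S ↔ Relation.ReflTransGen g u w := by
      intro w; rw [hS]; simp [Finset.mem_filter]
    have huS : u ∈ S := (hmemS u).2 .refl
    have hvS : v ∉ S := fun h => hreach ((hmemS v).1 h)
    have hclosed : ∀ x y, x ∈ S → g x y → y ∈ S := fun x y hx hr =>
      (hmemS y).2 (Relation.ReflTransGen.tail ((hmemS x).1 hx) hr)
    have hsum := flow_sum hf huS hvS
    rw [sum_outdeg, sum_indeg, prod_filter_split] at hsum
    have hzero : ((S ×ˢ (Finset.univ \ S)).filter (fun a => g a.1 a.2)).card = 0 := by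
      rw [Finset.card_eq_zero]
      ext a
      simp only [Finset.mem_filter, Finset.mem_product, Finset.mem_sdiff, Finset.mem_univ,
        true_and, Finset.notMem_empty, iff_false]
      rintro ⟨⟨h1, h2⟩, h3⟩
      exact h2 (hclosed _ _ h1 h3)
    have hmono : ((S ×ˢ S).filter (fun a => g a.1 a.2)).card
        ≤ ((Finset.univ ×ˢ S).filter (fun a => g a.1 a.2)).card :=
      Finset.card_le_card (Finset.filter_subset_filter _
        (Finset.product_subset_product (Finset.subset_univ S) (le_refl S)))
    omega

lemma flow_sub_path {A g : V → V → Prop} {u v : V} {n : ℕ} (hf : IsFlow A g u v (n + 1))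
    (hne : u ≠ v) (q : DWalk g u v) (hnd : q.support.Nodup) :
    IsFlow A (fun x y => g x y ∧ (x, y) ∉ q.darcs) u v n := by
  have hdg : ∀ {a : V × V}, a ∈ q.darcs → g a.1 a.2 := fun ha => DWalk.rel_of_mem_darcs ha
  have degOut : ∀ w, outdeg (fun x y => g x y ∧ (x, y) ∉ q.darcs) w
        + pcard (fun b => (w, b) ∈ q.darcs) = outdeg g w := by
    intro w
    exact pcard_split (fun b => g w b) (fun b => (w, b) ∈ q.darcs)
      (fun b hb => hdg hb)
  have degIn : ∀ w, indeg (fun x y => g x y ∧ (x, y) ∉ q.darcs) w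
        + pcard (fun b => (b, w) ∈ q.darcs) = indeg g w := by
    intro w
    exact pcard_split (fun b => g b w) (fun b => (b, w) ∈ q.darcs)
      (fun b hb => hdg hb)
  refine ⟨fun x y h => hf.1 x y h.1, ?_, ?_⟩
  · obtain ⟨s, hs⟩ := q.exists_darc_tail q.start_mem_support hne
    have hnohead : ∀ x, (x, u) ∉ q.darcs := DWalk.not_darc_head_start hnd
    have e1 := degOut u
    have e2 := degIn u
    have c1 := pcard_darc_tail_one hnd hs
    have c2 := pcard_darc_head_none hnohead
    have hval := hf.2.1
    omega
  · intro w hwu hwv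
    have e1 := degOut w
    have e2 := degIn w
    have hval := hf.2.2 w hwu hwv
    by_cases hwsup : w ∈ q.support
    · obtain ⟨s, hs⟩ := q.exists_darc_tail hwsup hwv
      obtain ⟨t, ht⟩ := q.exists_darc_head hwsup hwu
      have c1 := pcard_darc_tail_one hnd hs
      have c2 := pcard_darc_head_one hnd ht
      omega
    · have hnotail : ∀ y, (w, y) ∉ q.darcs := fun y hy =>
        hwsup (DWalk.fst_mem_support_of_mem_darcs hy)
      have hnohead : ∀ x, (x, w) ∉ q.darcs := fun x hx =>
        hwsup (List.mem_of_mem_tail (DWalk.snd_mem_tail_of_mem_darcs hx))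
      have c1 := pcard_darc_tail_none hnotail
      have c2 := pcard_darc_head_none hnohead
      omega

lemma flow_decomp {A : V → V → Prop} {u v : V} (hne : u ≠ v) :
    ∀ (n : ℕ) (g : V → V → Prop), IsFlow A g u v n →
      ∃ p : Fin n → DWalk A u v, (∀ i, (p i).support.Nodup)
        ∧ (∀ i, ∀ a ∈ (p i).darcs, g a.1 a.2)
        ∧ ∀ i j, i ≠ j → ∀ a, a ∈ (p i).darcs → a ∉ (p j).darcs := by
  intro n
  induction n with
  | zero =>
    intro g _
    exact ⟨fun i => i.elim0, fun i => i.elim0, fun i => i.elim0, fun i => i.elim0⟩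
  | succ n ih =>
    intro g hf
    obtain ⟨q, hnd⟩ := exists_gpath hf hne
    have hf' := flow_sub_path hf hne q hnd
    obtain ⟨p, hp1, hp2, hp3⟩ := ih _ hf'
    obtain ⟨Q, hQsup⟩ := q.transfer (fun a ha => hf.1 a.1 a.2 (DWalk.rel_of_mem_darcs ha))
    have hQdarcs : Q.darcs = q.darcs := DWalk.darcs_eq_of_support_eq hQsup
    refine ⟨Fin.cons Q p, ?_, ?_, ?_⟩
    · refine Fin.cases ?_ ?_
      · rw [Fin.cons_zero, hQsup]; exact hnd
      · intro j; rw [Fin.cons_succ]; exact hp1 j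
    · refine Fin.cases ?_ ?_
      · intro a ha
        rw [Fin.cons_zero, hQdarcs] at ha
        exact DWalk.rel_of_mem_darcs ha
      · intro j a ha
        rw [Fin.cons_succ] at ha
        exact (hp2 j a ha).1
    · refine Fin.cases ?_ ?_
      · refine Fin.cases ?_ ?_
        · intro h; exact absurd rfl h
        · intro j _ a ha haj
          rw [Fin.cons_zero, hQdarcs] at ha
          rw [Fin.cons_succ] at haj
          exact (hp2 j a haj).2 ha
      · intro i
        refine Fin.cases ?_ ?_
        · intro _ a hai haj
          rw [Fin.cons_succ] at hai
          rw [Fin.cons_zero, hQdarcs] at haj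
          exact (hp2 i a hai).2 haj
        · intro j hij a hai haj
          rw [Fin.cons_succ] at hai haj
          exact hp3 i j (fun h => hij (h ▸ rfl)) a hai haj

lemma menger {A : V → V → Prop} {u v : V} (hne : u ≠ v) (n : ℕ)
    (hcut : ∀ F : Finset (V × V), IsCut A u v F → n ≤ F.card) :
    ArcDisjointPaths A u v n := by
  obtain ⟨g, hg⟩ := exists_flow hne n hcut
  obtain ⟨p, h1, _, h3⟩ := flow_decomp hne n g hg
  exact ⟨p, h1, h3⟩

lemma cut_ge_of_paths {A : V → V → Prop} {u v : V} {k : ℕ} (h : ArcDisjointPaths A u v k)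
    {F : Finset (V × V)} (hF : IsCut A u v F) : k ≤ F.card := by
  obtain ⟨p, _, hdisj⟩ := h
  choose a hmem hFmem using fun i => hF (p i)
  have hinj : Function.Injective (fun i : Fin k => (⟨a i, hFmem i⟩ : {x // x ∈ F})) := by
    intro i j hij
    by_contra hne'
    have hij' : a i = a j := congrArg Subtype.val hij
    exact hdisj i j hne' (a i) (hmem i) (hij' ▸ hmem j)
  calc k = Fintype.card (Fin k) := (Fintype.card_fin k).symm
    _ ≤ Fintype.card {x // x ∈ F} := Fintype.card_le_of_injective _ hinj
    _ = F.card := Fintype.card_coe F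

end Flow

/-- For positive integers `k` and `ℓ`, a finite digraph `D` admits an
arc-`ℓ`-color-avoiding strongly `k`-arc-connected coloring if and only if `D` is strongly
`(k + ℓ)`-arc-connected. -/
theorem stmt9 [Fintype V] (A : V → V → Prop) (k ℓ : ℕ) (hk : 0 < k) (hℓ : 0 < ℓ) :
    (∃ (C : Type) (_ : Fintype C) (f : V → V → C),
        ∀ C' : Finset C, C'.card ≤ ℓ →
          StronglyArcConnected (fun u v => A u v ∧ f u v ∉ C') k)
    ↔ StronglyArcConnected A (k + ℓ) := by
  classical
  constructor
  · rintro ⟨C, instC, f, hcol⟩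
    have h0 := hcol ∅ (by simp)
    refine ⟨h0.1, ?_⟩
    intro u v huv
    refine menger huv (k + ℓ) ?_
    intro F hFcut
    by_contra hlt
    push_neg at hlt
    set CF : Finset C := F.image (fun a => f a.1 a.2) with hCF
    by_cases hcard : CF.card ≤ ℓ
    · have hs := hcol CF hcard
      obtain ⟨p, hp1, -⟩ := hs.2 u v huv
      set P := p ⟨0, hk⟩ with hP
      obtain ⟨Q, hQsup⟩ := P.transfer (B := A) (fun a ha => (DWalk.rel_of_mem_darcs ha).1)
      have hQdarcs := DWalk.darcs_eq_of_support_eq hQsup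
      obtain ⟨a, haQ, haF⟩ := hFcut Q
      rw [hQdarcs] at haQ
      exact (DWalk.rel_of_mem_darcs haQ).2 (Finset.mem_image_of_mem _ haF)
    · push_neg at hcard
      obtain ⟨C', hC'sub, hC'card⟩ := Finset.exists_subset_card_eq hcard.le
      have hs := hcol C' hC'card.le
      set F' : Finset (V × V) := F.filter (fun a => f a.1 a.2 ∉ C') with hF'
      have hcut' : IsCut (fun x y => A x y ∧ f x y ∉ C') u v F' := by
        intro p
        obtain ⟨Q, hQsup⟩ := p.transfer (B := A) (fun a ha => (DWalk.rel_of_mem_darcs ha).1)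
        have hQdarcs := DWalk.darcs_eq_of_support_eq hQsup
        obtain ⟨a, haQ, haF⟩ := hFcut Q
        rw [hQdarcs] at haQ
        refine ⟨a, haQ, ?_⟩
        rw [hF', Finset.mem_filter]
        exact ⟨haF, (DWalk.rel_of_mem_darcs haQ).2⟩
      have hge := cut_ge_of_paths (hs.2 u v huv) hcut'
      have harc : ∀ c : C, ∃ a : V × V, c ∈ C' → a ∈ F ∧ f a.1 a.2 = c := by
        intro c
        by_cases hc : c ∈ C'
        · have hmem := hC'sub hc
          rw [hCF, Finset.mem_image] at hmem
          obtain ⟨a, haF, hfa⟩ := hmem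
          exact ⟨a, fun _ => ⟨haF, hfa⟩⟩
        · exact ⟨(u, u), fun h => absurd h hc⟩
      choose arc harcspec using harc
      have hinjcard : ℓ ≤ (F \ F').card := by
        rw [← hC'card]
        refine Finset.card_le_card_of_injOn arc ?_ ?_
        · intro c hc
          obtain ⟨h1, h2⟩ := harcspec c hc
          rw [Finset.mem_coe, Finset.mem_sdiff]
          refine ⟨h1, ?_⟩
          rw [hF', Finset.mem_filter]
          push_neg
          intro _
          rw [h2]
          simpa using hc
        · intro c1 hc1 c2 hc2 heq
          rw [← (harcspec c1 hc1).2, ← (harcspec c2 hc2).2, heq]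
      have hsplit : (F \ F').card + F'.card = F.card :=
        Finset.card_sdiff_add_card_eq_card (Finset.filter_subset _ _)
      omega
  · rintro ⟨hex, hpaths⟩
    obtain ⟨eqv⟩ : Nonempty (V × V ≃ Fin (Fintype.card (V × V))) := ⟨Fintype.equivFin _⟩
    refine ⟨Fin (Fintype.card (V × V)), inferInstance, fun u v => eqv (u, v), ?_⟩
    intro C' hC'
    refine ⟨hex, ?_⟩
    intro u v huv
    obtain ⟨p, hnd, hdisj⟩ := hpaths u v huv
    set bad : Finset (Fin (k + ℓ)) :=
      Finset.univ.filter (fun i => ∃ a ∈ (p i).darcs, eqv a ∈ C') with hbad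
    have hbadmem : ∀ i, i ∈ bad ↔ ∃ a ∈ (p i).darcs, eqv a ∈ C' := by
      intro i; rw [hbad]; simp [Finset.mem_filter]
    have hchoice : ∀ i, ∃ a : V × V, i ∈ bad → (a ∈ (p i).darcs ∧ eqv a ∈ C') := by
      intro i
      by_cases hi : i ∈ bad
      · obtain ⟨a, ha1, ha2⟩ := (hbadmem i).1 hi
        exact ⟨a, fun _ => ⟨ha1, ha2⟩⟩
      · exact ⟨(u, u), fun h => absurd h hi⟩
    choose ac hac using hchoice
    have hbadcard : bad.card ≤ ℓ := by
      refine le_trans (Finset.card_le_card_of_injOn (fun i => eqv (ac i))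
        (fun i hi => (hac i hi).2) ?_) hC'
      intro i hi j hj hij
      have hij2 : ac i = ac j := eqv.injective hij
      by_contra hne'
      exact hdisj i j hne' (ac i) (hac i hi).1 (hij2 ▸ (hac j hj).1)
    have hgoodcard : k ≤ (Finset.univ \ bad).card := by
      have h1 : (Finset.univ \ bad).card + bad.card = (Finset.univ : Finset (Fin (k + ℓ))).card :=
        Finset.card_sdiff_add_card_eq_card (Finset.subset_univ bad)
      rw [Finset.card_univ, Fintype.card_fin] at h1
      omega
    obtain ⟨G, hGsub, hGcard⟩ := Finset.exists_subset_card_eq hgoodcard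
    set e := G.orderIsoOfFin hGcard with he
    have hgoodi : ∀ i : Fin k, (e i : Fin (k + ℓ)) ∉ bad := fun i =>
      (Finset.mem_sdiff.1 (hGsub (e i).2)).2
    have htrans : ∀ i : Fin k,
        ∃ q : DWalk (fun x y => A x y ∧ eqv (x, y) ∉ C') u v,
          q.support = (p (e i)).support := by
      intro i
      refine (p (e i)).transfer ?_
      intro a ha
      refine ⟨DWalk.rel_of_mem_darcs ha, fun hmem => hgoodi i ?_⟩
      rw [hbadmem]
      exact ⟨a, ha, by simpa using hmem⟩
    choose q hq using htrans
    have hqdarcs : ∀ i, (q i).darcs = (p (e i)).darcs :=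
      fun i => DWalk.darcs_eq_of_support_eq (hq i)
    refine ⟨q, ?_, ?_⟩
    · intro i
      rw [hq i]
      exact hnd _
    · intro i j hij a hai haj
      rw [hqdarcs i] at hai
      rw [hqdarcs j] at haj
      have hne' : (e i : Fin (k + ℓ)) ≠ (e j : Fin (k + ℓ)) := by
        intro h
        exact hij (e.injective (Subtype.ext h))
      exact hdisj _ _ hne' a hai haj

end Stmt9
end

section
/- Let G be a graph, w : E(G) → ℝ a weight function, and ω ∈ ℝ. Then G admits an edge-1-color-avoiding 1-connected coloring with two colors such that, after the removal of all edges of either color, there remains a spanning tree of total weight at most ω, if and only if G contains two edge-disjoint spanning trees each of total weight at most ω. -/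
namespace Stmt14

variable {V : Type*}

/-- Let `G` be a finite graph, `w` a weight function on its edges and
`ω` a real number. Then `G` admits an edge-1-color-avoiding 1-connected coloring with two
colors such that after the removal of all edges of either color there remains a spanning
tree of total weight at most `ω`, if and only if `G` contains two edge-disjoint spanning
trees each of total weight at most `ω`. -/
theorem stmt14 [Fintype V] [DecidableEq V] (G : SimpleGraph V) (w : Sym2 V → ℝ) (ω : ℝ) :
    (∃ f : Sym2 V → Bool,
        (∀ c : Bool, (G.deleteEdges {e | f e = c}).Connected) ∧
        ∀ c : Bool, ∃ T : SimpleGraph V, T ≤ G.deleteEdges {e | f e = c} ∧ T.IsTree ∧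
          ∑ e ∈ T.edgeSet.toFinite.toFinset, w e ≤ ω)
    ↔ ∃ T₁ T₂ : SimpleGraph V, T₁ ≤ G ∧ T₂ ≤ G ∧ T₁.IsTree ∧ T₂.IsTree ∧
        Disjoint T₁.edgeSet T₂.edgeSet ∧
        ∑ e ∈ T₁.edgeSet.toFinite.toFinset, w e ≤ ω ∧
        ∑ e ∈ T₂.edgeSet.toFinite.toFinset, w e ≤ ω := by
  classical
  constructor
  · rintro ⟨f, hconn, hT⟩
    obtain ⟨T₁, h1le, h1t, h1w⟩ := hT true
    obtain ⟨T₂, h2le, h2t, h2w⟩ := hT false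
    refine ⟨T₁, T₂, h1le.trans (SimpleGraph.deleteEdges_le _),
      h2le.trans (SimpleGraph.deleteEdges_le _), h1t, h2t, ?_, h1w, h2w⟩
    rw [Set.disjoint_left]
    intro e he1 he2
    have h1 := SimpleGraph.edgeSet_mono h1le he1
    have h2 := SimpleGraph.edgeSet_mono h2le he2
    rw [SimpleGraph.edgeSet_deleteEdges] at h1 h2
    cases hfe : f e
    · exact h2.2 hfe
    · exact h1.2 hfe
  · rintro ⟨T₁, T₂, h1le, h2le, h1t, h2t, hdisj, h1w, h2w⟩
    refine ⟨fun e => decide (e ∈ T₁.edgeSet), ?_, ?_⟩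
    case _ =>
      have hle2 : T₂ ≤ G.deleteEdges {e | decide (e ∈ T₁.edgeSet) = true} := by
        intro a b hab
        rw [SimpleGraph.deleteEdges_adj]
        refine ⟨h2le hab, ?_⟩
        simp only [Set.mem_setOf_eq, decide_eq_true_eq]
        intro hmem
        exact Set.disjoint_left.mp hdisj hmem (by exact hab)
      have hle1 : T₁ ≤ G.deleteEdges {e | decide (e ∈ T₁.edgeSet) = false} := by
        intro a b hab
        rw [SimpleGraph.deleteEdges_adj]
        refine ⟨h1le hab, ?_⟩
        simp only [Set.mem_setOf_eq, decide_eq_false_iff_not, not_not]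
        exact hab
      intro c
      cases c
      · exact h1t.isConnected.mono hle1
      · exact h2t.isConnected.mono hle2
    case _ =>
      intro c
      cases c
      · refine ⟨T₁, ?_, h1t, h1w⟩
        intro a b hab
        rw [SimpleGraph.deleteEdges_adj]
        refine ⟨h1le hab, ?_⟩
        simp only [Set.mem_setOf_eq, decide_eq_false_iff_not, not_not]
        exact hab
      · refine ⟨T₂, ?_, h2t, h2w⟩
        intro a b hab
        rw [SimpleGraph.deleteEdges_adj]
        refine ⟨h2le hab, ?_⟩
        simp only [Set.mem_setOf_eq, decide_eq_true_eq]
        intro hmem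
        exact Set.disjoint_left.mp hdisj hmem (by exact hab)

end Stmt14
end

section
/- Let ℓ be a positive integer and let D be an r-rooted (ℓ+1)-arc-connected digraph with distinguished vertex r. Then the minimum number of colors in an arc-ℓ-color-avoiding r-rooted 1-connected coloring of D is exactly ℓ+1; that is, D admits an arc-ℓ-color-avoiding r-rooted 1-connected coloring with ℓ+1 colors, and no such coloring exists with at most ℓ colors. -/
namespace Stmt15

universe u

/-- A directed walk in the digraph given by the arc relation `A`. -/
inductive DWalk {V : Type u} (A : V → V → Prop) : V → V → Type u
  | nil {v : V} : DWalk A v v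
  | cons {u v w : V} (h : A u v) (p : DWalk A v w) : DWalk A u w

/-- The list of vertices visited by a directed walk (in order). -/
def DWalk.support {V : Type u} {A : V → V → Prop} : {u v : V} → DWalk A u v → List V
  | u, _, .nil => [u]
  | u, _, .cons _ p => u :: p.support

/-- The list of arcs traversed by a directed walk. -/
def DWalk.darcs {V : Type u} {A : V → V → Prop} {u v : V} (p : DWalk A u v) : List (V × V) :=
  p.support.zip p.support.tail

variable {V : Type u}

/-- There exist `k` pairwise arc-disjoint directed `u`-`v` paths. -/
def ArcDisjointPaths (A : V → V → Prop) (u v : V) (k : ℕ) : Prop :=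
  ∃ p : Fin k → DWalk A u v,
    (∀ i, (p i).support.Nodup) ∧
    ∀ i j, i ≠ j → ∀ a, a ∈ (p i).darcs → a ∉ (p j).darcs

/-- A digraph is `r`-rooted `k`-arc-connected: it has at least two vertices and there are at
least `k` pairwise arc-disjoint directed paths from `r` to every other vertex. -/
def RootedArcConnected (A : V → V → Prop) (r : V) (k : ℕ) : Prop :=
  (∃ u v : V, u ≠ v) ∧ ∀ v : V, v ≠ r → ArcDisjointPaths A r v k

/-! ### Auxiliary lemmas about walks -/

section Walks

variable {A : V → V → Prop}

lemma DWalk.support_eq {u v : V} (p : DWalk A u v) : ∃ t, p.support = u :: t := by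
  cases p <;> exact ⟨_, rfl⟩

lemma DWalk.darcs_nil {v : V} : (DWalk.nil : DWalk A v v).darcs = [] := rfl

lemma DWalk.darcs_cons {u v w : V} (h : A u v) (p : DWalk A v w) :
    (DWalk.cons h p).darcs = (u, v) :: p.darcs := by
  obtain ⟨t, ht⟩ := p.support_eq
  simp [DWalk.darcs, DWalk.support, ht]

lemma DWalk.mem_darcs : ∀ {u v : V} (p : DWalk A u v) (a : V × V), a ∈ p.darcs → A a.1 a.2
  | _, _, .nil, a, ha => by simp [DWalk.darcs_nil] at ha
  | _, _, .cons h p, a, ha => by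
    rw [DWalk.darcs_cons] at ha
    rcases List.mem_cons.mp ha with rfl | ha'
    · exact h
    · exact DWalk.mem_darcs p a ha'

lemma DWalk.crossing (X : Finset V) :
    ∀ {u v : V} (p : DWalk A u v), u ∈ X → v ∉ X →
      ∃ a ∈ p.darcs, a.1 ∈ X ∧ a.2 ∉ X
  | u, _, .nil, hu, hv => absurd hu hv
  | u, v, .cons (v := m) h q, hu, hv => by
    rw [DWalk.darcs_cons]
    by_cases hm : m ∈ X
    · obtain ⟨a, ha, h1, h2⟩ := DWalk.crossing X q hm hv
      exact ⟨a, List.mem_cons_of_mem _ ha, h1, h2⟩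
    · exact ⟨(u, m), List.mem_cons_self, hu, hm⟩

lemma DWalk.extractFrom (w : V) :
    ∀ {a v : V} (q : DWalk A a v), w ∈ q.support →
      ∃ q₂ : DWalk A w v, q₂.support.Sublist q.support
  | a, _, .nil, hw => by
    simp only [DWalk.support, List.mem_singleton] at hw
    subst hw
    exact ⟨.nil, List.Sublist.refl _⟩
  | a, v, .cons (v := m) h q, hw => by
    rcases eq_or_ne w a with rfl | hne
    · exact ⟨.cons h q, List.Sublist.refl _⟩
    · have hw' : w ∈ q.support := by
        rcases List.mem_cons.mp hw with rfl | hw'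
        · exact absurd rfl hne
        · exact hw'
      obtain ⟨q₂, hs⟩ := DWalk.extractFrom w q hw'
      exact ⟨q₂, hs.trans (List.sublist_cons_self _ _)⟩

lemma DWalk.exists_nodup :
    ∀ {u v : V} (p : DWalk A u v),
      ∃ q : DWalk A u v, q.support.Nodup ∧ ∀ x ∈ q.support, x ∈ p.support
  | u, _, .nil => ⟨.nil, by simp [DWalk.support], fun x hx => hx⟩
  | u, v, .cons (v := m) h p => by
    obtain ⟨q, hnd, hsub⟩ := DWalk.exists_nodup p
    by_cases hu : u ∈ q.support
    · obtain ⟨q₂, hs⟩ := DWalk.extractFrom u q hu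
      exact ⟨q₂, hnd.sublist hs,
        fun x hx => List.mem_cons_of_mem _ (hsub x (hs.subset hx))⟩
    · refine ⟨.cons h q, ?_, ?_⟩
      · exact List.nodup_cons.mpr ⟨hu, hnd⟩
      · intro x hx
        rcases List.mem_cons.mp hx with rfl | hx'
        · exact List.mem_cons_self
        · exact List.mem_cons_of_mem _ (hsub x hx')

lemma reach_toWalk {R : V → V → Prop} {u v : V} (h : Relation.ReflTransGen R u v) :
    Nonempty (DWalk R u v) := by
  induction h using Relation.ReflTransGen.head_induction_on with
  | refl => exact ⟨.nil⟩
  | head h _ ih => exact ⟨.cons h ih.some⟩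

lemma DWalk.no_arc {R : V → V → Prop} (hR : ∀ x y, ¬ R x y) :
    ∀ {u v : V}, DWalk R u v → u = v
  | _, _, .nil => rfl
  | _, _, .cons h _ => absurd h (hR _ _)

end Walks

/-! ### Cuts -/

section Cuts

open Finset

attribute [local instance] Classical.propDecidable

variable [Fintype V]

/-- The set of arcs of `E` leaving the vertex set `X`. -/
noncomputable def outCut (E : Finset (V × V)) (X : Finset V) : Finset (V × V) :=
  E.filter (fun a => a.1 ∈ X ∧ a.2 ∉ X)

lemma mem_outCut {E : Finset (V × V)} {X : Finset V} {a : V × V} :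
    a ∈ outCut E X ↔ a ∈ E ∧ a.1 ∈ X ∧ a.2 ∉ X := by
  simp [outCut]

lemma outCut_subset {E E' : Finset (V × V)} (h : E ⊆ E') (X : Finset V) :
    outCut E X ⊆ outCut E' X := by
  intro a ha
  rw [mem_outCut] at ha ⊢
  exact ⟨h ha.1, ha.2⟩

lemma submod (E : Finset (V × V)) (X Y : Finset V) :
    (outCut E (X ∪ Y)).card + (outCut E (X ∩ Y)).card
      ≤ (outCut E X).card + (outCut E Y).card := by
  simp only [outCut, Finset.card_filter]
  rw [← Finset.sum_add_distrib, ← Finset.sum_add_distrib]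
  apply Finset.sum_le_sum
  intro a _
  by_cases h1 : a.1 ∈ X <;> by_cases h2 : a.1 ∈ Y <;>
    by_cases h3 : a.2 ∈ X <;> by_cases h4 : a.2 ∈ Y <;>
      simp [Finset.mem_union, Finset.mem_inter, h1, h2, h3, h4]

/-- Reachability via arcs in `E`. -/
def Reach (E : Finset (V × V)) (u v : V) : Prop :=
  Relation.ReflTransGen (fun a b => (a, b) ∈ E) u v

lemma reach_all (E : Finset (V × V)) (r : V)
    (hcut : ∀ X : Finset V, r ∈ X → X ≠ univ → 1 ≤ (outCut E X).card) :
    ∀ v, Reach E r v := by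
  by_contra h
  push_neg at h
  obtain ⟨v, hv⟩ := h
  set R : Finset V := univ.filter (fun x => Reach E r x) with hR
  have hrR : r ∈ R := by simp [hR]; exact Relation.ReflTransGen.refl
  have hRuniv : R ≠ univ := by
    intro he
    apply hv
    have := Finset.mem_univ v
    rw [← he] at this
    simpa [hR] using this
  obtain ⟨a, ha⟩ := Finset.card_pos.mp (lt_of_lt_of_le zero_lt_one (hcut R hrR hRuniv))
  rw [mem_outCut] at ha
  obtain ⟨haE, h1, h2⟩ := ha
  have hr1 : Reach E r a.1 := by simpa [hR] using h1
  have : Reach E r a.2 := hr1.tail (show (a.1, a.2) ∈ E by simpa using haE)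
  exact h2 (by simp [hR, this])


lemma lovasz_step (k : ℕ) (E F : Finset (V × V)) (r : V) (S : Finset V)
    (hrS : r ∈ S) (hSuniv : S ≠ univ)
    (hFS : ∀ a ∈ F, a.1 ∈ S ∧ a.2 ∈ S)
    (hbig : ∀ X : Finset V, r ∈ X → X ≠ univ → k + 1 ≤ (outCut E X).card)
    (hinv : ∀ X : Finset V, r ∈ X → X ≠ univ → k ≤ (outCut (E \ F) X).card) :
    ∃ a ∈ E \ F, a.1 ∈ S ∧ a.2 ∉ S ∧
      ∀ X : Finset V, r ∈ X → X ≠ univ → a.1 ∈ X → a.2 ∉ X →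
        k + 1 ≤ (outCut (E \ F) X).card := by
  set Crit : Finset V → Prop :=
    fun X => r ∈ X ∧ X ∪ S ≠ univ ∧ (outCut (E \ F) X).card ≤ k with hCrit
  have crit_ne_univ : ∀ X, Crit X → X ≠ univ := by
    intro X hX h
    exact hX.2.1 (by rw [h]; simp)
  by_cases hc : ∃ X, Crit X
  · -- there is a critical set; take one of maximal cardinality
    obtain ⟨X₀, hX₀⟩ := hc
    have hne : (univ.filter (fun X : Finset V => Crit X)).Nonempty :=
      ⟨X₀, Finset.mem_filter.mpr ⟨Finset.mem_univ _, hX₀⟩⟩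
    obtain ⟨X, hXmem, hXmax⟩ := Finset.exists_max_image _ (fun X : Finset V => X.card) hne
    have hX : Crit X := (Finset.mem_filter.mp hXmem).2
    have hXmax' : ∀ Y : Finset V, Crit Y → Y.card ≤ X.card := by
      intro Y hY
      exact hXmax Y (Finset.mem_filter.mpr ⟨Finset.mem_univ _, hY⟩)
    have hXuniv : X ≠ univ := crit_ne_univ X hX
    -- S is not contained in X
    have hSX : ¬ S ⊆ X := by
      intro hsub
      have h1 : k + 1 ≤ (outCut E X).card := hbig X hX.1 hXuniv
      have h2 : (outCut (E \ F) X).card ≤ k := hX.2.2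
      have hss : outCut (E \ F) X ⊂ outCut E X := by
        refine Finset.ssubset_of_subset_of_ssubset (Finset.Subset.refl _) ?_
        exact Finset.ssubset_iff_subset_ne.mpr ⟨outCut_subset (Finset.sdiff_subset) X,
          fun h => by rw [h] at h2; omega⟩
      obtain ⟨a, haE, haF⟩ := Finset.exists_of_ssubset hss
      rw [mem_outCut] at haE haF
      have haF' : a ∈ F := by
        by_contra haF'
        exact haF ⟨Finset.mem_sdiff.mpr ⟨haE.1, haF'⟩, haE.2⟩
      exact haE.2.2 (hsub (hFS a haF').2)
    -- X ∪ S is not critical, hence its cut is large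
    have hXSuniv : X ∪ S ≠ univ := hX.2.1
    have hXScut : k + 1 ≤ (outCut (E \ F) (X ∪ S)).card := by
      by_contra hlt
      push_neg at hlt
      have hcritXS : Crit (X ∪ S) := by
        refine ⟨Finset.mem_union_left _ hX.1, by rwa [Finset.union_assoc, Finset.union_self], ?_⟩
        omega
      have hcard : (X ∪ S).card ≤ X.card := hXmax' _ hcritXS
      have : X ∪ S = X := (Finset.eq_of_subset_of_card_le (Finset.subset_union_left) hcard).symm
      exact hSX (by rw [← this]; exact Finset.subset_union_right)
    -- find an arc leaving X ∪ S whose tail is in S \ X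
    have hB : (outCut (E \ F) (X ∪ S)).filter (fun a => a.1 ∈ X) ⊆ outCut (E \ F) X := by
      intro a ha
      rw [Finset.mem_filter, mem_outCut] at ha
      rw [mem_outCut]
      exact ⟨ha.1.1, ha.2, fun h => ha.1.2.2 (Finset.mem_union_left _ h)⟩
    have hBcard : ((outCut (E \ F) (X ∪ S)).filter (fun a => a.1 ∈ X)).card ≤ k :=
      le_trans (Finset.card_le_card hB) hX.2.2
    have : ∃ a ∈ outCut (E \ F) (X ∪ S), a.1 ∉ X := by
      by_contra hno
      push_neg at hno
      have : outCut (E \ F) (X ∪ S) ⊆ (outCut (E \ F) (X ∪ S)).filter (fun a => a.1 ∈ X) := by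
        intro a ha
        exact Finset.mem_filter.mpr ⟨ha, hno a ha⟩
      have := Finset.card_le_card this
      omega
    obtain ⟨a, ha, haX⟩ := this
    rw [mem_outCut] at ha
    have ha1S : a.1 ∈ S := by
      rcases Finset.mem_union.mp ha.2.1 with h | h
      · exact absurd h haX
      · exact h
    have ha2S : a.2 ∉ S := fun h => ha.2.2 (Finset.mem_union_right _ h)
    have ha2X : a.2 ∉ X := fun h => ha.2.2 (Finset.mem_union_left _ h)
    refine ⟨a, ha.1, ha1S, ha2S, ?_⟩
    intro Y hrY hYuniv ha1Y ha2Y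
    by_contra hlt
    push_neg at hlt
    have hYcrit : Crit Y := by
      refine ⟨hrY, ?_, by omega⟩
      intro h
      have := Finset.mem_univ a.2
      rw [← h] at this
      rcases Finset.mem_union.mp this with h' | h'
      · exact ha2Y h'
      · exact ha2S h'
    -- submodularity yields a larger critical set X ∪ Y
    have hsub := submod (E \ F) X Y
    have hXY : k ≤ (outCut (E \ F) (X ∩ Y)).card := by
      apply hinv _ (Finset.mem_inter.mpr ⟨hX.1, hrY⟩)
      intro h
      apply hXuniv
      apply Finset.eq_univ_of_forall
      intro x
      have := Finset.mem_univ x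
      rw [← h] at this
      exact (Finset.mem_inter.mp this).1
    have hXYcut : (outCut (E \ F) (X ∪ Y)).card ≤ k := by
      have h1 := hX.2.2
      have h2 : (outCut (E \ F) Y).card ≤ k := by omega
      omega
    have hXYcrit : Crit (X ∪ Y) := by
      refine ⟨Finset.mem_union_left _ hX.1, ?_, hXYcut⟩
      intro h
      have := Finset.mem_univ a.2
      rw [← h] at this
      rcases Finset.mem_union.mp this with h' | h'
      · rcases Finset.mem_union.mp h' with h'' | h''
        · exact ha2X h''
        · exact ha2Y h''
      · exact ha2S h'
    have hcard : (X ∪ Y).card ≤ X.card := hXmax' _ hXYcrit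
    have hXY' : X ∪ Y = X := (Finset.eq_of_subset_of_card_le (Finset.subset_union_left) hcard).symm
    apply haX
    rw [← hXY']
    exact Finset.mem_union_right _ ha1Y
  · -- no critical set: any arc of E \ F leaving S works
    push_neg at hc
    have hScut : k + 1 ≤ (outCut (E \ F) S).card := by
      by_contra hlt
      push_neg at hlt
      exact hc S ⟨hrS, by rwa [Finset.union_self], by omega⟩
    have : (outCut (E \ F) S).Nonempty := Finset.card_pos.mp (by omega)
    obtain ⟨a, ha⟩ := this
    rw [mem_outCut] at ha
    refine ⟨a, ha.1, ha.2.1, ha.2.2, ?_⟩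
    intro X hrX hXuniv ha1X ha2X
    by_contra hlt
    push_neg at hlt
    apply hc X
    refine ⟨hrX, ?_, by omega⟩
    intro h
    have := Finset.mem_univ a.2
    rw [← h] at this
    rcases Finset.mem_union.mp this with h' | h'
    · exact ha2X h'
    · exact ha.2.2 h'


lemma reach_mono {E E' : Finset (V × V)} (h : E ⊆ E') {u v : V} (hr : Reach E u v) :
    Reach E' u v :=
  Relation.ReflTransGen.mono (fun _ _ hxy => h hxy) _ _ hr

lemma grow (k : ℕ) (E : Finset (V × V)) (r : V)
    (hbig : ∀ X : Finset V, r ∈ X → X ≠ univ → k + 1 ≤ (outCut E X).card) :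
    ∀ (n : ℕ) (F : Finset (V × V)), F ⊆ E →
      (∀ a ∈ F, Reach F r a.1 ∧ Reach F r a.2) →
      (∀ X : Finset V, r ∈ X → X ≠ univ → k ≤ (outCut (E \ F) X).card) →
      (univ.filter (fun v => ¬ Reach F r v)).card ≤ n →
      ∃ F', F' ⊆ E ∧ (∀ v, Reach F' r v) ∧
        ∀ X : Finset V, r ∈ X → X ≠ univ → k ≤ (outCut (E \ F') X).card := by
  intro n
  induction n with
  | zero =>
    intro F hFE hFreach hFcut hmeas
    refine ⟨F, hFE, ?_, hFcut⟩
    intro v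
    by_contra hv
    have : v ∈ univ.filter (fun v => ¬ Reach F r v) := by simp [hv]
    have := Finset.card_pos.mpr ⟨v, this⟩
    omega
  | succ n ih =>
    intro F hFE hFreach hFcut hmeas
    by_cases hall : ∀ v, Reach F r v
    · exact ⟨F, hFE, hall, hFcut⟩
    · push_neg at hall
      obtain ⟨w₀, hw₀⟩ := hall
      set S : Finset V := univ.filter (fun v => Reach F r v) with hS
      have hrS : r ∈ S := by simp [hS]; exact Relation.ReflTransGen.refl
      have hSuniv : S ≠ univ := by
        intro h
        apply hw₀
        have := Finset.mem_univ w₀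
        rw [← h] at this
        simpa [hS] using this
      have hFS : ∀ a ∈ F, a.1 ∈ S ∧ a.2 ∈ S := by
        intro a ha
        simp only [hS, Finset.mem_filter, Finset.mem_univ, true_and]
        exact hFreach a ha
      obtain ⟨a, haEF, ha1S, ha2S, hastep⟩ :=
        lovasz_step k E F r S hrS hSuniv hFS hbig hFcut
      rw [Finset.mem_sdiff] at haEF
      -- add the arc a to F
      have hdiff : E \ insert a F = (E \ F).erase a := by
        ext x
        simp only [Finset.mem_sdiff, Finset.mem_insert, Finset.mem_erase]
        tauto
      have hreach1 : Reach (insert a F) r a.1 := by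
        have : Reach F r a.1 := by simpa [hS] using ha1S
        exact reach_mono (Finset.subset_insert _ _) this
      have hreach2 : Reach (insert a F) r a.2 := by
        refine hreach1.tail ?_
        show (a.1, a.2) ∈ insert a F
        simpa using Finset.mem_insert_self a F
      apply ih (insert a F)
      · exact Finset.insert_subset haEF.1 hFE
      · intro b hb
        rcases Finset.mem_insert.mp hb with rfl | hb'
        · exact ⟨hreach1, hreach2⟩
        · exact ⟨reach_mono (Finset.subset_insert _ _) (hFreach b hb').1,
            reach_mono (Finset.subset_insert _ _) (hFreach b hb').2⟩
      · intro X hrX hXuniv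
        rw [hdiff]
        by_cases hcross : a.1 ∈ X ∧ a.2 ∉ X
        · have := hastep X hrX hXuniv hcross.1 hcross.2
          have h1 : (outCut (E \ F) X).erase a ⊆ outCut ((E \ F).erase a) X := by
            intro b hb
            rw [Finset.mem_erase] at hb
            rw [mem_outCut] at hb ⊢
            exact ⟨Finset.mem_erase.mpr ⟨hb.1, hb.2.1⟩, hb.2.2⟩
          have h2 := Finset.card_le_card h1
          have h3 := Finset.card_erase_of_mem
            (mem_outCut.mpr ⟨Finset.mem_sdiff.mpr haEF, hcross.1, hcross.2⟩)
          omega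
        · have h1 : outCut (E \ F) X ⊆ outCut ((E \ F).erase a) X := by
            intro b hb
            rw [mem_outCut] at hb ⊢
            refine ⟨Finset.mem_erase.mpr ⟨?_, hb.1⟩, hb.2⟩
            rintro rfl
            exact hcross hb.2
          exact le_trans (hFcut X hrX hXuniv) (Finset.card_le_card h1)
      · -- the measure decreases
        have hsub : univ.filter (fun v => ¬ Reach (insert a F) r v) ⊆
            (univ.filter (fun v => ¬ Reach F r v)).erase a.2 := by
          intro x hx
          rw [Finset.mem_filter] at hx
          refine Finset.mem_erase.mpr ⟨?_, ?_⟩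
          · rintro rfl
            exact hx.2 hreach2
          · exact Finset.mem_filter.mpr ⟨Finset.mem_univ _,
              fun h => hx.2 (reach_mono (Finset.subset_insert _ _) h)⟩
        have h2mem : a.2 ∈ univ.filter (fun v => ¬ Reach F r v) := by
          refine Finset.mem_filter.mpr ⟨Finset.mem_univ _, ?_⟩
          intro h
          exact ha2S (by simp [hS, h])
        have := Finset.card_le_card hsub
        have := Finset.card_erase_of_mem h2mem
        omega

lemma edmonds (r : V) (k : ℕ) :
    ∀ E : Finset (V × V),
      (∀ X : Finset V, r ∈ X → X ≠ univ → k + 1 ≤ (outCut E X).card) →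
      ∃ g : V × V → Fin (k + 1), ∀ (c : Fin (k + 1)) (v : V),
        Relation.ReflTransGen (fun x y => (x, y) ∈ E ∧ g (x, y) = c) r v := by
  induction k with
  | zero =>
    intro E hcut
    refine ⟨fun _ => 0, ?_⟩
    intro c v
    have := reach_all E r (fun X h1 h2 => hcut X h1 h2) v
    have hsub : Subsingleton (Fin (0 + 1)) := Fin.subsingleton_one
    exact Relation.ReflTransGen.mono (fun x y h => ⟨h, @Subsingleton.elim _ hsub _ _⟩) _ _ this
  | succ k ih =>
    intro E hcut
    obtain ⟨F, hFE, hFall, hFcut⟩ :=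
      grow (k + 1) E r hcut (univ.filter (fun v => ¬ Reach (∅ : Finset (V × V)) r v)).card
        ∅ (Finset.empty_subset _) (by simp)
        (by intro X h1 h2; rw [Finset.sdiff_empty]; have := hcut X h1 h2; omega)
        le_rfl
    obtain ⟨g', hg'⟩ := ih (E \ F) hFcut
    refine ⟨fun a => if a ∈ F then Fin.last (k + 1) else (g' a).castSucc, ?_⟩
    intro c v
    rcases Fin.eq_castSucc_or_eq_last c with ⟨c', rfl⟩ | rfl
    · refine Relation.ReflTransGen.mono (fun x y h => ?_) _ _ (hg' c' v)
      obtain ⟨hE, hgc⟩ := h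
      rw [Finset.mem_sdiff] at hE
      exact ⟨hE.1, by simp [hE.2, hgc]⟩
    · refine Relation.ReflTransGen.mono (fun x y h => ?_) _ _ (hFall v)
      exact ⟨hFE h, by simp [h]⟩

lemma cut_of_connected (A : V → V → Prop) (r : V) (k : ℕ)
    (h : ∀ v, v ≠ r → ArcDisjointPaths A r v k) :
    ∀ X : Finset V, r ∈ X → X ≠ univ →
      k ≤ (outCut (univ.filter (fun a : V × V => A a.1 a.2)) X).card := by
  intro X hr hX
  obtain ⟨v, hv⟩ : ∃ v, v ∉ X := by
    by_contra hno
    push_neg at hno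
    exact hX (Finset.eq_univ_of_forall hno)
  have hvr : v ≠ r := fun e => hv (e ▸ hr)
  obtain ⟨p, hnd, hdisj⟩ := h v hvr
  have hcross : ∀ i : Fin k, ∃ a ∈ (p i).darcs, a.1 ∈ X ∧ a.2 ∉ X :=
    fun i => DWalk.crossing X (p i) hr hv
  choose g hg1 hg2 hg3 using hcross
  have hginj : Function.Injective g := by
    intro i j hij
    by_contra hne
    exact hdisj i j hne (g i) (hg1 i) (hij ▸ hg1 j)
  have hmem : ∀ i, g i ∈ outCut (univ.filter (fun a : V × V => A a.1 a.2)) X := by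
    intro i
    refine mem_outCut.mpr ⟨?_, hg2 i, hg3 i⟩
    simp only [Finset.mem_filter, Finset.mem_univ, true_and]
    exact DWalk.mem_darcs (p i) (g i) (hg1 i)
  calc k = (univ : Finset (Fin k)).card := by simp
    _ ≤ _ := Finset.card_le_card_of_injOn g (fun i _ => hmem i) hginj.injOn

end Cuts

/-- Let `ℓ` be a positive integer and let `D` be a finite `r`-rooted
`(ℓ+1)`-arc-connected digraph. Then the minimum number of colors in an
arc-`ℓ`-color-avoiding `r`-rooted 1-connected coloring of `D` is exactly `ℓ+1`: there is
such a coloring with `ℓ+1` colors, and there is none with at most `ℓ` colors. -/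
theorem stmt15 [Fintype V] (A : V → V → Prop) (r : V) (ℓ : ℕ) (hℓ : 0 < ℓ)
    (hD : RootedArcConnected A r (ℓ + 1)) :
    (∃ f : V → V → Fin (ℓ + 1),
        ∀ C' : Finset (Fin (ℓ + 1)), C'.card ≤ ℓ →
          RootedArcConnected (fun u v => A u v ∧ f u v ∉ C') r 1) ∧
    (∀ (C : Type) [Fintype C], Fintype.card C ≤ ℓ → ∀ f : V → V → C,
        ¬ ∀ C' : Finset C, C'.card ≤ ℓ →
            RootedArcConnected (fun u v => A u v ∧ f u v ∉ C') r 1) := by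
  classical
  obtain ⟨hex, hpaths⟩ := hD
  constructor
  · -- a good coloring with ℓ + 1 colors exists (Edmonds' theorem)
    set E : Finset (V × V) := Finset.univ.filter (fun a : V × V => A a.1 a.2) with hE
    have hcut := cut_of_connected A r (ℓ + 1) hpaths
    obtain ⟨g, hg⟩ := edmonds r ℓ E (fun X h1 h2 => hcut X h1 h2)
    refine ⟨fun u v => g (u, v), ?_⟩
    intro C' hC'
    have hCne : ∃ c : Fin (ℓ + 1), c ∉ C' := by
      by_contra hno
      push_neg at hno
      have : C' = Finset.univ := Finset.eq_univ_of_forall hno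
      rw [this, Finset.card_univ] at hC'
      simp at hC'
    obtain ⟨c, hc⟩ := hCne
    refine ⟨hex, ?_⟩
    intro v _
    have hreach' : Relation.ReflTransGen
        (fun x y => A x y ∧ (fun u v => g (u, v)) x y ∉ C') r v := by
      refine Relation.ReflTransGen.mono (fun x y h => ?_) _ _ (hg c v)
      obtain ⟨hE', hgc⟩ := h
      rw [hE, Finset.mem_filter] at hE'
      exact ⟨hE'.2, by simpa [hgc] using hc⟩
    obtain ⟨w⟩ := reach_toWalk hreach'
    obtain ⟨q, hq, -⟩ := DWalk.exists_nodup w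
    refine ⟨fun _ => q, fun _ => hq, ?_⟩
    intro i j hij
    exact absurd (Subsingleton.elim i j) hij
  · -- no good coloring with at most ℓ colors exists
    intro C _ hcard f hall
    have h := hall Finset.univ (by rw [Finset.card_univ]; exact hcard)
    obtain ⟨w, hw⟩ : ∃ w, w ≠ r := by
      obtain ⟨u, v, huv⟩ := hex
      rcases eq_or_ne u r with rfl | hur
      · exact ⟨v, fun hvr => huv hvr.symm⟩
      · exact ⟨u, hur⟩
    obtain ⟨p, -, -⟩ := h.2 w hw
    have := DWalk.no_arc (R := fun u v => A u v ∧ f u v ∉ Finset.univ)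
      (fun x y hxy => hxy.2 (Finset.mem_univ _)) (p 0)
    exact hw this.symm

end Stmt15
end
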